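/- arXiv:1607.03291 — 5 statements merged into one kernel-verified Lean document; each statement's English description precedes it below -/
import Mathlib

section
/- Let X be a set and let n ≥ 1 be a natural number. Then the following are equivalent: (1) the cardinality of X is at least ℵ_{n−1}; (2) for every function S : [X]^{<ω} → [X]^{<ω} there exists a set Y ⊆ X of cardinality exactly n such that S(A) ∩ Y ⊆ A for all A ⊆ Y. -/
open Cardinal

private theorem finset_subset_card_le {X : Type*} (D : Set X) (κ : Cardinal) (hD : #D ≤ κ)
    (hκ : ℵ₀ ≤ κ) : #{A : Finset X // ↑A ⊆ D} ≤ κ := by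
  classical
  have hinj : Function.Injective (fun A : {A : Finset X // ↑A ⊆ D} => A.1.subtype (· ∈ D)) := by
    intro A B h
    ext1
    have hA := Finset.subtype_map_of_mem (p := (· ∈ D)) (s := A.1) (fun x hx => A.2 hx)
    have hB := Finset.subtype_map_of_mem (p := (· ∈ D)) (s := B.1) (fun x hx => B.2 hx)
    rw [← hA, ← hB]; exact congrArg _ h
  have h1 : #{A : Finset X // ↑A ⊆ D} ≤ #(Finset D) := Cardinal.mk_le_of_injective hinj
  refine h1.trans ?_
  cases finite_or_infinite D with
  | inl h => exact (Cardinal.mk_le_aleph0).trans hκ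
  | inr h => rw [Cardinal.mk_finset_of_infinite]; exact hD

/-- One-step closure iteration. -/
private def sClosure {X : Type*} (S : Finset X → Finset X) (T₀ : Set X) : ℕ → Set X
  | 0 => T₀
  | k+1 => sClosure S T₀ k ∪ ⋃ A ∈ {A : Finset X | ↑A ⊆ sClosure S T₀ k}, (↑(S A) : Set X)

private theorem kuratowski_forward {X : Type*} [DecidableEq X] (m : ℕ) :
    ∀ T : Set X, Cardinal.aleph m ≤ #T → ∀ S : Finset X → Finset X,
      ∃ Y : Finset X, ↑Y ⊆ T ∧ Y.card = m + 1 ∧ ∀ A ⊆ Y, S A ∩ Y ⊆ A := by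
  classical
  induction m with
  | zero =>
    intro T hT S
    rw [Nat.cast_zero, Cardinal.aleph_zero] at hT
    have hTinf : T.Infinite := by
      rw [← Set.infinite_coe_iff]
      exact Cardinal.aleph0_le_mk_iff.1 hT
    obtain ⟨y, hyT, hyS⟩ := (hTinf.diff (S ∅).finite_toSet).nonempty
    refine ⟨{y}, by simpa using hyT, by simp, fun A hA => ?_⟩
    rcases Finset.subset_singleton_iff.1 hA with rfl | rfl
    · intro t ht
      rw [Finset.mem_inter, Finset.mem_singleton] at ht
      exact absurd (ht.1) (ht.2 ▸ hyS)
    · exact Finset.inter_subset_right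
  | succ m ih =>
    intro T hT S
    have haleph_le : Cardinal.aleph m ≤ Cardinal.aleph (m+1 : ℕ) := by
      apply Cardinal.aleph_le_aleph.2
      exact_mod_cast Nat.cast_le.2 (Nat.le_succ m)
    have hal0 : ℵ₀ ≤ Cardinal.aleph (m : Ordinal) := Cardinal.aleph0_le_aleph _
    -- a subset T₀ ⊆ T of size aleph m
    obtain ⟨p, hp⟩ := Cardinal.le_mk_iff_exists_set.1 (haleph_le.trans hT)
    set T₀ : Set X := Subtype.val '' p with hT₀def
    have hT₀T : T₀ ⊆ T := by
      rintro x ⟨y, _, rfl⟩; exact y.2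
    have hT₀card : #T₀ = Cardinal.aleph m := by
      rw [hT₀def, Cardinal.mk_image_eq Subtype.val_injective, hp]
    set C : ℕ → Set X := sClosure S T₀ with hCdef
    have hCmono : Monotone C := by
      apply monotone_nat_of_le_succ
      intro k
      exact Set.subset_union_left
    have hCcard : ∀ k, #(C k) ≤ Cardinal.aleph m := by
      intro k
      induction k with
      | zero => exact hT₀card.le
      | succ k ihk =>
        have hU : #(⋃ A ∈ {A : Finset X | ↑A ⊆ C k}, (↑(S A) : Set X)) ≤ Cardinal.aleph m := by
          rw [Set.biUnion_eq_iUnion]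
          refine (Cardinal.mk_iUnion_le _).trans ?_
          have h1 : #{A : Finset X // ↑A ⊆ C k} ≤ Cardinal.aleph m :=
            finset_subset_card_le _ _ ihk hal0
          have h2 : ⨆ A : {A : Finset X // ↑A ⊆ C k}, #(↑(S A.1) : Set X) ≤ ℵ₀ := by
            apply ciSup_le'
            intro A
            exact Cardinal.mk_le_aleph0
          calc #{A : Finset X // ↑A ⊆ C k} * ⨆ A : {A : Finset X // ↑A ⊆ C k}, #(↑(S A.1) : Set X)
              ≤ Cardinal.aleph m * ℵ₀ := by
                exact mul_le_mul' h1 h2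
            _ ≤ Cardinal.aleph m * Cardinal.aleph m := by
                exact mul_le_mul' le_rfl hal0
            _ = Cardinal.aleph m := Cardinal.mul_eq_self hal0
        show #(C k ∪ _ : Set X) ≤ _
        refine (Cardinal.mk_union_le _ _).trans ?_
        calc #(C k) + #(⋃ A ∈ {A : Finset X | ↑A ⊆ C k}, (↑(S A) : Set X))
            ≤ Cardinal.aleph m + Cardinal.aleph m := add_le_add ihk hU
          _ = Cardinal.aleph m := Cardinal.add_eq_self hal0
    set Cl : Set X := ⋃ k, C k with hCldef
    have hClcard : #Cl ≤ Cardinal.aleph m := by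
      have hrw : Cl = ⋃ k : ULift.{_, 0} ℕ, C k.down := by
        rw [hCldef]
        ext t
        simp only [Set.mem_iUnion]
        exact ⟨fun ⟨k, hk⟩ => ⟨⟨k⟩, hk⟩, fun ⟨k, hk⟩ => ⟨k.down, hk⟩⟩
      rw [hrw]
      refine (Cardinal.mk_iUnion_le _).trans ?_
      have h2 : ⨆ k : ULift ℕ, #(C k.down) ≤ Cardinal.aleph m := ciSup_le' fun k => hCcard k.down
      calc #(ULift ℕ) * ⨆ k : ULift ℕ, #(C k.down) ≤ ℵ₀ * Cardinal.aleph m := by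
            exact mul_le_mul' (by simp) h2
        _ ≤ Cardinal.aleph m * Cardinal.aleph m := by
            exact mul_le_mul' hal0 le_rfl
        _ = Cardinal.aleph m := Cardinal.mul_eq_self hal0
    have hT₀Cl : T₀ ⊆ Cl := Set.subset_iUnion C 0
    have hclosed : ∀ A : Finset X, ↑A ⊆ Cl → (↑(S A) : Set X) ⊆ Cl := by
      intro A hA
      have hidx : ∀ a ∈ A, ∃ k, a ∈ C k := by
        intro a ha
        exact Set.mem_iUnion.1 (hA ha)
      let idx : X → ℕ := fun a => if h : ∃ k, a ∈ C k then Nat.find h else 0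
      have hmem : ∀ a ∈ A, a ∈ C (idx a) := by
        intro a ha
        have h := hidx a ha
        simp only [idx, dif_pos h]
        exact Nat.find_spec h
      have hAK : ↑A ⊆ C (A.sup idx) := by
        intro a ha
        exact hCmono (Finset.le_sup ha) (hmem a ha)
      have : (↑(S A) : Set X) ⊆ C (A.sup idx + 1) := by
        intro t ht
        refine Set.mem_union_right _ ?_
        exact Set.mem_biUnion hAK ht
      exact this.trans (Set.subset_iUnion C _)
    -- pick x ∈ T \ Cl
    have hx : ∃ x ∈ T, x ∉ Cl := by
      by_contra hcon
      push_neg at hcon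
      have : #T ≤ #Cl := Cardinal.mk_le_mk_of_subset hcon
      have hlt : Cardinal.aleph m < Cardinal.aleph (m+1 : ℕ) := by
        apply Cardinal.aleph_lt_aleph.2
        exact_mod_cast Nat.cast_lt.2 (Nat.lt_succ_self m)
      exact absurd (hT.trans (this.trans hClcard)) hlt.not_ge
    obtain ⟨x, hxT, hxCl⟩ := hx
    set T' : Set X := Cl ∩ T with hT'def
    have hT'card : Cardinal.aleph m ≤ #T' := by
      rw [← hT₀card]
      exact Cardinal.mk_le_mk_of_subset (Set.subset_inter hT₀Cl hT₀T)
    obtain ⟨Y', hY'T', hY'card, hY'free⟩ :=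
      ih T' hT'card (fun A => S A ∪ S (insert x A))
    have hY'Cl : ↑Y' ⊆ Cl := fun y hy => (hY'T' hy).1
    have hxY' : x ∉ Y' := fun h => hxCl (hY'Cl h)
    refine ⟨insert x Y', ?_, ?_, ?_⟩
    · intro y hy
      rcases Finset.mem_coe.1 hy |> Finset.mem_insert.1 with rfl | h
      · exact hxT
      · exact (hY'T' h).2
    · rw [Finset.card_insert_of_notMem hxY', hY'card]
    · intro A hA t ht
      rw [Finset.mem_inter] at ht
      by_cases hxA : x ∈ A
      · -- A = insert x (A.erase x), A.erase x ⊆ Y'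
        have hB : A.erase x ⊆ Y' := by
          intro y hy
          rcases Finset.mem_insert.1 (hA (Finset.mem_of_mem_erase hy)) with rfl | h
          · exact absurd rfl (Finset.ne_of_mem_erase hy)
          · exact h
        have hSA : S A ⊆ S (A.erase x) ∪ S (insert x (A.erase x)) := by
          rw [Finset.insert_erase hxA]
          exact Finset.subset_union_right
        rcases Finset.mem_insert.1 ht.2 with rfl | htY'
        · exact hxA
        · have := hY'free (A.erase x) hB (Finset.mem_inter.2 ⟨hSA ht.1, htY'⟩)
          exact Finset.mem_of_mem_erase this
      · -- A ⊆ Y', so S A ⊆ Cl and x ∉ S A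
        have hAY' : A ⊆ Y' := by
          intro y hy
          rcases Finset.mem_insert.1 (hA hy) with rfl | h
          · exact absurd hy hxA
          · exact h
        have hACl : ↑A ⊆ Cl := fun y hy => hY'Cl (hAY' hy)
        have hSACl : (↑(S A) : Set X) ⊆ Cl := hclosed A hACl
        rcases Finset.mem_insert.1 ht.2 with rfl | htY'
        · exact absurd (hSACl ht.1) hxCl
        · have := hY'free A hAY'
            (Finset.mem_inter.2 ⟨Finset.subset_union_left ht.1, htY'⟩)
          exact this

private theorem kuratowski_converse {X : Type*} [DecidableEq X] (m : ℕ) :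
    ∀ T : Set X, #T < Cardinal.aleph m →
      ∃ S : Finset X → Finset X, ∀ Y : Finset X, ↑Y ⊆ T →
        (∀ A ⊆ Y, S A ∩ Y ⊆ A) → Y.card ≤ m := by
  classical
  induction m with
  | zero =>
    intro T hT
    rw [Nat.cast_zero, Cardinal.aleph_zero, Cardinal.lt_aleph0_iff_set_finite] at hT
    refine ⟨fun _ => hT.toFinset, fun Y hYT hfree => ?_⟩
    have h := hfree ∅ (Finset.empty_subset Y)
    have : Y ⊆ ∅ := by
      intro y hy
      exact h (Finset.mem_inter.2 ⟨hT.mem_toFinset.2 (hYT hy), hy⟩)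
    simp [Finset.subset_empty.1 this]
  | succ m ih =>
    intro T hT
    have hTle : #T ≤ Cardinal.aleph m := by
      have : ((m+1 : ℕ) : Ordinal) = Order.succ (m : Ordinal) := by
        push_cast; rw [Ordinal.add_one_eq_succ]
      rw [this, Cardinal.aleph_succ, Order.lt_succ_iff] at hT
      exact hT
    -- embed T into the ordinal (aleph m).ord
    set O := (Cardinal.aleph (m : Ordinal)).ord.ToType with hO
    have hmkO : #O = Cardinal.aleph m := Cardinal.mk_ord_toType _
    have hne : Nonempty O := by
      rw [← Cardinal.mk_ne_zero_iff, hmkO]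
      exact (Cardinal.aleph_pos _).ne'
    obtain ⟨f⟩ : Nonempty (T ↪ O) := by
      rw [← Cardinal.le_def, hmkO]; exact hTle
    let g : X → O := fun x => if h : x ∈ T then f ⟨x, h⟩ else Classical.arbitrary O
    have gInj : ∀ x ∈ T, ∀ y ∈ T, g x = g y → x = y := by
      intro x hx y hy hxy
      simp only [g, dif_pos hx, dif_pos hy] at hxy
      exact congrArg Subtype.val (f.injective hxy)
    -- segments are small
    have hseg : ∀ x : X, #{y : X | y ∈ T ∧ g y < g x} < Cardinal.aleph m := by
      intro x
      have hinj : Function.Injective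
          (fun y : {y : X | y ∈ T ∧ g y < g x} => (⟨g y.1, y.2.2⟩ : {z : O // z < g x})) := by
        intro a b h
        exact Subtype.ext (gInj _ a.2.1 _ b.2.1 (congrArg Subtype.val h))
      have h1 : #{y : X | y ∈ T ∧ g y < g x} ≤ #{z : O // z < g x} :=
        Cardinal.mk_le_of_injective hinj
      have h2 : #{z : O // z < g x} < Cardinal.aleph m := by
        have := Ordinal.typein_lt_self (g x)
        rw [Cardinal.lt_ord] at this
        exact this
      exact h1.trans_lt h2
    choose Sx hSx using fun x => ih {y : X | y ∈ T ∧ g y < g x} (hseg x)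
    refine ⟨fun A => A.biUnion fun x => Sx x (A.filter fun y => g y < g x),
      fun Y hYT hfree => ?_⟩
    rcases Finset.eq_empty_or_nonempty Y with rfl | hYne
    · simp
    obtain ⟨x, hxY, hmax⟩ := Y.exists_max_image g hYne
    have hY'seg : ↑(Y.erase x) ⊆ {y : X | y ∈ T ∧ g y < g x} := by
      intro y hy
      simp only [Finset.coe_erase, Set.mem_diff, Set.mem_singleton_iff] at hy
      refine ⟨hYT hy.1, lt_of_le_of_ne (hmax y hy.1) fun h => hy.2 ?_⟩
      exact gInj y (hYT hy.1) x (hYT hxY) h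
    have hY'free : ∀ B ⊆ Y.erase x, Sx x B ∩ Y.erase x ⊆ B := by
      intro B hB
      have hBY : B ⊆ Y := hB.trans (Finset.erase_subset _ _)
      have hA : insert x B ⊆ Y := Finset.insert_subset hxY hBY
      have hfilter : (insert x B).filter (fun y => g y < g x) = B := by
        ext y
        simp only [Finset.mem_filter, Finset.mem_insert]
        constructor
        · rintro ⟨rfl | hyB, hlt⟩
          · exact absurd hlt (lt_irrefl _)
          · exact hyB
        · intro hyB
          exact ⟨Or.inr hyB, (hY'seg (hB hyB)).2⟩
      have hsub : Sx x B ⊆ (insert x B).biUnion fun z => Sx z ((insert x B).filter fun y => g y < g z) := by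
        intro t ht
        exact Finset.mem_biUnion.2 ⟨x, Finset.mem_insert_self _ _, by rwa [hfilter]⟩
      intro t ht
      rw [Finset.mem_inter] at ht
      have htY : t ∈ Y := Finset.mem_of_mem_erase ht.2
      have := hfree (insert x B) hA (Finset.mem_inter.2 ⟨hsub ht.1, htY⟩)
      rcases Finset.mem_insert.1 this with rfl | h
      · exact absurd rfl (Finset.ne_of_mem_erase ht.2)
      · exact h
    have := hSx x (Y.erase x) hY'seg hY'free
    have hcard := Finset.card_erase_add_one hxY
    omega

/-- Kuratowski–Sierpiński type theorem: `|X| ≥ ℵ_{n-1}` iff every set mapping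
`S : [X]^{<ω} → [X]^{<ω}` admits a free set `Y` of cardinality exactly `n`,
i.e. `S A ∩ Y ⊆ A` for all `A ⊆ Y`. -/
theorem statement0 {X : Type*} [DecidableEq X] (n : ℕ) (hn : 1 ≤ n) :
    Cardinal.aleph (n - 1 : ℕ) ≤ Cardinal.mk X ↔
      ∀ S : Finset X → Finset X, ∃ Y : Finset X, Y.card = n ∧
        ∀ A ⊆ Y, S A ∩ Y ⊆ A := by
  constructor
  · intro h S
    have huniv : Cardinal.aleph ((n-1 : ℕ) : Ordinal) ≤ #(Set.univ : Set X) := by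
      rwa [Cardinal.mk_univ]
    obtain ⟨Y, _, hcard, hfree⟩ := kuratowski_forward (n-1) Set.univ huniv S
    exact ⟨Y, by omega, hfree⟩
  · intro h
    by_contra hc
    rw [not_le] at hc
    have huniv : #(Set.univ : Set X) < Cardinal.aleph ((n-1 : ℕ) : Ordinal) := by
      rwa [Cardinal.mk_univ]
    obtain ⟨S, hS⟩ := kuratowski_converse (n-1) Set.univ huniv
    obtain ⟨Y, hcard, hfree⟩ := h S
    have := hS Y (Set.subset_univ _) hfree
    omega
end

section
/- Let X be an uncountable set, m a natural number, and S : [X]^{<ω} → [X]^{<ω} a function. Then there exist a set Y ⊆ X and a bijection u : {1,…,m} → Y such that S(u(A)) ∩ Y ⊆ u(A) whenever A is of the form A = {k : i ≤ k ≤ j} for some i, j ∈ {1,…,m}, where u(A) denotes the image of A under u. -/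
/-!
Build countable sets `D 0 ⊆ D 1 ⊆ ⋯` and infinite layers `L t ⊆ D (t + 1)` avoiding both `D t`
and every value of `S` on a finite subset of `D t`; this is possible because `X` is uncountable.
Taking `u t ∈ L t` makes `u t` avoid `S (u '' A)` whenever `A` lies to the left of `t`. The points
are chosen from right to left: `u t` only has to avoid the finitely many finite sets
`S (u '' B)` with `B ⊆ (t, m]`, and the layer `L t` is infinite. An interval not containing `t`
lies on one side of `t`.
-/

open Set

section

variable {X : Type*} (S : Finset X → Finset X)

def adjoinValues (C : Set X) : Set X :=
  C ∪ ⋃ B ∈ {B : Finset X | ↑B ⊆ C}, (↑(S B) : Set X)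

lemma union_subset_adjoinValues {C : Set X} {B : Finset X} (hB : ↑B ⊆ C) :
    ↑B ∪ ↑(S B) ⊆ adjoinValues S C :=
  union_subset (hB.trans subset_union_left) fun _ hx => Or.inr (mem_biUnion hB hx)

lemma Set.Countable.adjoinValues {C : Set X} (hC : C.Countable) :
    (adjoinValues S C).Countable := by
  refine hC.union (Countable.biUnion ?_ fun B _ => (S B).finite_toSet.countable)
  have hpre : {B : Finset X | ↑B ⊆ C} =
      ((↑) : Finset X → Set X) ⁻¹' {t : Set X | t.Finite ∧ t ⊆ C} := by
    ext B; simp [Finset.finite_toSet]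
  rw [hpre]
  exact (countable_ofPred_finite_subset hC).preimage Finset.coe_injective

lemma exists_countable_infinite_disjoint_adjoinValues [Uncountable X] {C : Set X}
    (hC : C.Countable) :
    ∃ L : Set X, L.Countable ∧ L.Infinite ∧ Disjoint L (adjoinValues S C) := by
  have hcompl : (adjoinValues S C)ᶜ.Infinite := fun hfin =>
    not_countable_univ (by simpa using (hC.adjoinValues S).union hfin.countable)
  obtain ⟨L, hL, hLc, hLi⟩ := hcompl.exists_subset_countable_infinite
  exact ⟨L, hLc, hLi, disjoint_compl_left.mono_left hL⟩

lemma exists_layers [Uncountable X] :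
    ∃ D L : ℕ → Set X, Monotone D ∧ (∀ t, L t ⊆ D (t + 1)) ∧ (∀ t, (L t).Infinite) ∧
      ∀ t, Disjoint (L t) (adjoinValues S (D t)) := by
  choose L hL using fun C : {C : Set X // C.Countable} =>
    exists_countable_infinite_disjoint_adjoinValues S C.2
  let D : ℕ → {C : Set X // C.Countable} := fun t =>
    Nat.rec ⟨∅, countable_empty⟩ (fun _ C => ⟨C.1 ∪ L C, C.2.union (hL C).1⟩) t
  exact ⟨fun t => (D t).1, fun t => L (D t),
    monotone_nat_of_le_succ fun _ => subset_union_left, fun _ => subset_union_right,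
    fun t => (hL (D t)).2.1, fun t => (hL (D t)).2.2⟩

variable [DecidableEq X]

lemma exists_forall_notMem_image_Ioc {L : ℕ → Set X} (hL : ∀ t, (L t).Infinite) (m : ℕ) :
    ∃ w : ℕ → X, ∀ t ∈ Finset.Icc 1 m,
      w t ∈ L t ∧ ∀ B ⊆ Finset.Ioc t m, w t ∉ S (B.image w) := by
  refine Nat.decreasingInduction
    (motive := fun a _ => ∃ w : ℕ → X, ∀ t ∈ Finset.Icc a m,
      w t ∈ L t ∧ ∀ B ⊆ Finset.Ioc t m, w t ∉ S (B.image w))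
    (fun a ha ⟨w, hw⟩ => ?_) ⟨fun _ => (hL 0).nonempty.some, by simp⟩ (by omega : 1 ≤ m + 1)
  set F := (Finset.Ioc a m).powerset.biUnion fun B => S (B.image w)
  obtain ⟨x, hxL, hxF⟩ := ((hL a).sdiff F.finite_toSet).nonempty
  have himage : ∀ B ⊆ Finset.Ioc a m, B.image (Function.update w a x) = B.image w := by
    intro B hB
    refine Finset.image_congr fun k hk => Function.update_of_ne ?_ _ _
    have := Finset.mem_Ioc.mp (hB hk)
    omega
  refine ⟨Function.update w a x, fun t ht => ?_⟩
  rcases eq_or_ne t a with rfl | hta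
  · refine ⟨by simpa using hxL, fun B hB hxB => hxF ?_⟩
    rw [Function.update_self, himage B hB] at hxB
    exact Finset.mem_biUnion.mpr ⟨B, Finset.mem_powerset.mpr hB, hxB⟩
  · have ht' : t ∈ Finset.Icc (a + 1) m := by
      simp only [Finset.mem_Icc] at ht ⊢
      omega
    have hBa : ∀ B ⊆ Finset.Ioc t m, B ⊆ Finset.Ioc a m := fun B hB =>
      hB.trans (Finset.Ioc_subset_Ioc_left (by have := Finset.mem_Icc.mp ht'; omega))
    rw [Function.update_of_ne hta]
    refine ⟨(hw t ht').1, fun B hB => ?_⟩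
    rw [himage B (hBa B hB)]
    exact (hw t ht').2 B hB

lemma notMem_image_union_of_subset_Ico {D L : ℕ → Set X} (hD : Monotone D)
    (hLD : ∀ t, L t ⊆ D (t + 1)) (hdisj : ∀ t, Disjoint (L t) (adjoinValues S (D t)))
    {m : ℕ} {w : ℕ → X} (hw : ∀ t ∈ Finset.Icc 1 m, w t ∈ L t) ⦃t : ℕ⦄
    (ht : t ∈ Finset.Icc 1 m) ⦃B : Finset ℕ⦄ (hB : B ⊆ Finset.Ico 1 t) :
    w t ∉ (↑(B.image w) ∪ ↑(S (B.image w)) : Set X) := by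
  have himage : ↑(B.image w) ⊆ D t := by
    intro y hy
    obtain ⟨k, hk, rfl⟩ := Finset.mem_image.mp hy
    have hk' := Finset.mem_Ico.mp (hB hk)
    have ht' := Finset.mem_Icc.mp ht
    exact hD hk'.2 (hLD k (hw k (Finset.mem_Icc.mpr ⟨hk'.1, by omega⟩)))
  exact fun h => disjoint_left.mp (hdisj t) (hw t ht) (union_subset_adjoinValues S himage h)

end

/-- For an uncountable `X`, `m : ℕ` and a set mapping `S : [X]^{<ω} → [X]^{<ω}`, there is
a bijection `u` from `{1, …, m}` onto a subset `Y = u '' {1, …, m}` of `X` such that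
`S (u '' A) ∩ Y ⊆ u '' A` whenever `A` is an interval `{k : i ≤ k ≤ j}` with
`i, j ∈ {1, …, m}`. -/
theorem statement1 {X : Type*} [DecidableEq X] [Uncountable X] (m : ℕ)
    (S : Finset X → Finset X) :
    ∃ u : ℕ → X, Set.InjOn u ↑(Finset.Icc 1 m) ∧
      ∀ i ∈ Finset.Icc 1 m, ∀ j ∈ Finset.Icc 1 m,
        S ((Finset.Icc i j).image u) ∩ (Finset.Icc 1 m).image u ⊆
          (Finset.Icc i j).image u := by
  obtain ⟨D, L, hD, hLD, hL, hdisj⟩ := exists_layers S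
  obtain ⟨w, hw⟩ := exists_forall_notMem_image_Ioc S hL m
  have hleft := notMem_image_union_of_subset_Ico S hD hLD hdisj (m := m) fun t ht => (hw t ht).1
  have hne : ∀ a ∈ Finset.Icc 1 m, ∀ b ∈ Finset.Icc 1 m, a < b → w a ≠ w b :=
    fun a ha b hb hab h => hleft hb
      (Finset.singleton_subset_iff.mpr (Finset.mem_Ico.mpr ⟨(Finset.mem_Icc.mp ha).1, hab⟩))
      (Or.inl (by simp [h]))
  refine ⟨w, injOn_iff_pairwise_ne.mpr fun a ha b hb hab => ?_, ?_⟩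
  · rcases hab.lt_or_gt with hab | hab
    exacts [hne a ha b hb hab, (hne b hb a ha hab).symm]
  · intro i hi j hj x hx
    obtain ⟨hxS, hxY⟩ := Finset.mem_inter.mp hx
    obtain ⟨t, ht, rfl⟩ := Finset.mem_image.mp hxY
    rw [Finset.mem_Icc] at hi hj ht
    by_contra hnot
    rcases lt_or_ge t i with hti | hit
    · exact (hw t (Finset.mem_Icc.mpr ht)).2 _
        (fun k hk => by simp only [Finset.mem_Icc, Finset.mem_Ioc] at hk ⊢; omega) hxS
    · have hjt : j < t := by
        by_contra! htj
        exact hnot (Finset.mem_image_of_mem w (Finset.mem_Icc.mpr ⟨hit, htj⟩))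
      exact hleft (Finset.mem_Icc.mpr ht)
        (fun k hk => by simp only [Finset.mem_Icc, Finset.mem_Ico] at hk ⊢; omega) (Or.inr hxS)
end

section
/- Let 𝓕 be a finite family of finite sets and let n ≥ 1. Suppose that for every function S : [ω_n]^{<ω} → [ω_n]^{<ω} satisfying (i) S(A) ⊆ S(B) whenever A ⊆ B, (ii) α ∉ S(A) whenever A is nonempty and max(A) < α < ω_n, and (iii) S({α}) = ∅ for all α < ω_n, there exist a set Y ⊆ ω_n and a bijection u : ⋃𝓕 → Y such that S(u(A)) ∩ Y ⊆ u(A) for all A ∈ 𝓕. Then 𝔣𝔯(𝓕) ≤ n. -/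
open Cardinal

noncomputable section

/-- The underlying set of the ordinal `ω_n`, the least ordinal of cardinality `ℵ_n`,
realized as a type. -/
abbrev OmegaN (n : ℕ) : Type := ((Cardinal.aleph n).ord).ToType

/-- `n` is *free* for the family `𝓕` of finite sets: for every set mapping
`S : [ω_n]^{<ω} → [ω_n]^{<ω}` there is a bijection `u` from `⋃ 𝓕` onto a subset
`Y = u '' (⋃ 𝓕)` of `ω_n` such that `S (u '' A) ∩ Y ⊆ u '' A` for all `A ∈ 𝓕`. -/
def IsFree {α : Type*} [DecidableEq α] (𝓕 : Finset (Finset α)) (n : ℕ) : Prop :=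
  ∀ S : Finset (OmegaN n) → Finset (OmegaN n),
    ∃ u : α → OmegaN n, Set.InjOn u ↑(𝓕.sup id) ∧
      ∀ A ∈ 𝓕, S (A.image u) ∩ (𝓕.sup id).image u ⊆ A.image u

/-- The index `𝔣𝔯 𝓕`: the least `n` which is free for `𝓕`. -/
noncomputable def fr {α : Type*} [DecidableEq α] (𝓕 : Finset (Finset α)) : ℕ :=
  sInf {n | IsFree 𝓕 n}

/-- Conditions (1)–(4) of a nested-orders family on `X`,
where a sequence `(t₁, …, t_k)` is represented by the list `[t₁, …, t_k]`. -/
def NestedBase {α : Type*} (X : Set α) (S : Set (List α)) : Prop :=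
  (∀ l ∈ S, ∀ x ∈ l, x ∈ X) ∧
  (∀ t ∈ X, [t] ∈ S) ∧
  (∀ l ∈ S, l.Nodup) ∧
  (∀ (l : List α) (t : α), l ++ [t] ∈ S → l ∈ S) ∧
  (∀ (l : List α) (s t : α), l ++ [s, t] ∈ S → l ++ [t] ∈ S) ∧
  (∀ (l : List α) (s t u : α), l ++ [s, t] ∈ S → l ++ [t, u] ∈ S → l ++ [s, u] ∈ S)

/-- A nested-orders family on `X`: conditions (1)–(5). -/
def IsNestedOrders {α : Type*} (X : Set α) (S : Set (List α)) : Prop :=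
  NestedBase X S ∧
  ∀ (l : List α) (s t : α), l ++ [t] ∈ S → l ++ [s] ∈ S → t ≠ s →
    (l ++ [t, s] ∈ S ∨ l ++ [s, t] ∈ S)

/-- An `n`-nested-orders family on `X`: sequences of length at most `n+2`,
conditions (1)–(4), and condition (5) for `k < n`. -/
def IsNNestedOrders {α : Type*} (n : ℕ) (X : Set α) (S : Set (List α)) : Prop :=
  NestedBase X S ∧
  (∀ l ∈ S, l.length ≤ n + 2) ∧
  ∀ (l : List α) (s t : α), l.length < n → l ++ [t] ∈ S → l ++ [s] ∈ S → t ≠ s →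
    (l ++ [t, s] ∈ S ∨ l ++ [s, t] ∈ S)

/-- `A` satisfies the defining condition of membership in `𝓕_{𝔖,n}`: whenever
`(t₁, …, t_{n+2}) ∈ 𝔖` and `t₁, …, t_{n+1} ∈ A`, also `t_{n+2} ∈ A`. -/
def MemFam {α : Type*} (n : ℕ) (S : Set (List α)) (A : Finset α) : Prop :=
  ∀ (l : List α) (t : α), l.length = n + 1 → l ++ [t] ∈ S →
    (∀ x ∈ l, x ∈ A) → t ∈ A

/-- The index `𝔫𝔬 𝓕`: the least `n` for which there is an `n`-nested-orders family `𝔖`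
on `⋃ 𝓕` with `𝓕 ⊆ 𝓕_{𝔖,n}`. -/
noncomputable def no {α : Type*} [DecidableEq α] (𝓕 : Finset (Finset α)) : ℕ :=
  sInf {n | ∃ S : Set (List α),
    IsNNestedOrders n ↑(𝓕.sup id) S ∧ ∀ A ∈ 𝓕, MemFam n S A}

/-!
Given an arbitrary set mapping `S` on `ω_n`, we find an order embedding `e` of `ω_n` into itself
whose range `W` is free for `S` in two ways: `S B` meets `W` only below `max B` for finite `B ⊆ W`,
and `S {γ}` meets `W` only above `γ`. The first is arranged by transfinite recursion, choosing each
value above everything that `S` produces from finite sets of earlier values (fewer than `ℵ_n`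
points, by regularity). The second comes from a pressing-down argument: bounding the largest
element of `S {γ}` below `γ` by one fixed `δ` on a cofinal set, and recursing inside that set
above `δ`.

Pulling `S` back along `e`, keeping only values produced from subsets of size at least two and
lying below the maximum of the argument, gives a monotone, regressive set mapping that vanishes
on singletons. A bijection free for it, composed with `e`, is free for `S`.
-/

open Set Order Function

theorem Cardinal.IsRegular.isRegularCardinalOrder_toType {c : Cardinal} (hc : c.IsRegular) :
    IsRegularCardinalOrder c.ord.ToType :=
  ⟨by rw [Ordinal.type_toType, Ordinal.cof_toType, hc.cof_ord]⟩

theorem Cardinal.isRegular_aleph_natCast {n : ℕ} (hn : 1 ≤ n) : (ℵ_ n).IsRegular := by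
  obtain ⟨m, rfl⟩ := Nat.exists_eq_add_of_le' hn
  exact_mod_cast isRegular_aleph_add_one m

theorem Cardinal.mk_finset_lt {β : Type*} {c : Cardinal} (hc : ℵ₀ < c) (hβ : #β < c) :
    #(Finset β) < c := by
  cases finite_or_infinite β
  · exact (lt_aleph0_of_finite _).trans hc
  · rwa [mk_finset_of_infinite]

theorem IsCofinal.inter_Ioi {α : Type*} [LinearOrder α] [NoMaxOrder α] {s : Set α}
    (hs : IsCofinal s) (a : α) : IsCofinal (s ∩ Ioi a) := by
  intro x
  obtain ⟨y, hy⟩ := exists_gt (max x a)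
  obtain ⟨z, hz, hyz⟩ := hs y
  exact ⟨z, ⟨hz, (le_max_right x a).trans_lt (hy.trans_le hyz)⟩,
    (le_max_left x a).trans (hy.trans_le hyz).le⟩

section RegularCardinalOrder

variable {α : Type*} [LinearOrder α] [WellFoundedLT α] [IsRegularCardinalOrder α]

theorem isRegular_cardinalMk (hα : ℵ₀ ≤ #α) : (#α).IsRegular :=
  ⟨hα, by rw [ord_cardinalMk, Ordinal.cof_type, cof_eq_cardinalMk]⟩

theorem noMaxOrder_of_one_lt_mk (hα : 1 < #α) : NoMaxOrder α := by
  have : Nonempty α := mk_ne_zero_iff.1 (zero_lt_one.trans hα).ne'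
  rw [← noTopOrder_iff_noMaxOrder, ← one_lt_cof_iff, cof_eq_cardinalMk]
  exact hα

theorem mk_Iic_lt (hα : ℵ₀ ≤ #α) (x : α) : #(Iic x) < #α := by
  rw [← Iio_insert]
  exact mk_insert_le.trans_lt
    (add_lt_of_lt hα (mk_Iio_lt x ord_cardinalMk) (one_lt_aleph0.trans_le hα))

theorem exists_forall_lt_of_mk_lt {A : Set α} (hA : #A < #α) : ∃ y, ∀ a ∈ A, a < y :=
  not_isCofinal_iff.1 fun h => (cof_le h).not_gt (by rwa [cof_eq_cardinalMk])

theorem exists_gt_forall_lt_of_mk_lt (hα : ℵ₀ ≤ #α) (x : α) {A : Set α} (hA : #A < #α) :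
    ∃ y, x < y ∧ ∀ a ∈ A, a < y := by
  obtain ⟨y, hy⟩ := exists_forall_lt_of_mk_lt (A := insert x A)
    (mk_insert_le.trans_lt (add_lt_of_lt hα hA (one_lt_aleph0.trans_le hα)))
  exact ⟨y, hy x (mem_insert x A), fun a ha => hy a (mem_insert_of_mem x ha)⟩

theorem exists_gt_forall_lt_map_lt (hα : ℵ₀ < #α) (g : α → α) (a : α) :
    ∃ γ, a < γ ∧ ∀ δ < γ, g δ < γ := by
  have : Nonempty α := ⟨a⟩
  let := WellFoundedLT.toOrderBot α
  let := WellFoundedLT.conditionallyCompleteLinearOrderBot α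
  have step (x : α) : ∃ y, x < y ∧ ∀ δ ∈ g '' Iio x, δ < y :=
    exists_gt_forall_lt_of_mk_lt hα.le x (mk_image_le.trans_lt (mk_Iio_lt x ord_cardinalMk))
  choose next hlt hnext using step
  let c : ℕ → α := fun k => next^[k] a
  have hbdd : BddAbove (range c) := by
    obtain ⟨y, hy⟩ := exists_forall_lt_of_mk_lt
      ((le_aleph0_iff_set_countable.2 (countable_range c)).trans_lt hα)
    exact ⟨y, fun z hz => (hy z hz).le⟩
  refine ⟨sSup (range c), (hlt a).trans_le (le_csSup hbdd ⟨1, rfl⟩), fun δ hδ => ?_⟩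
  obtain ⟨_, ⟨k, rfl⟩, hk⟩ := exists_lt_of_lt_csSup (range_nonempty c) hδ
  exact (hnext _ _ ⟨δ, hk, rfl⟩).trans_le
    (le_csSup hbdd ⟨k + 1, iterate_succ_apply' next k a⟩)

/-- A weak form of Fodor's pressing-down lemma. -/
theorem exists_isCofinal_setOf_forall_mem_le (hα : ℵ₀ < #α) (T : α → Finset α)
    (hT : ∀ γ, ∀ x ∈ T γ, x < γ) : ∃ δ, IsCofinal {γ | ∀ x ∈ T γ, x ≤ δ} := by
  by_contra! H
  choose g hg using fun δ => not_isCofinal_iff.1 (H δ)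
  obtain ⟨a⟩ : Nonempty α := mk_ne_zero_iff.1 (aleph0_pos.trans hα).ne'
  obtain ⟨γ, haγ, hγ⟩ := exists_gt_forall_lt_map_lt hα g a
  let δ := (insert a (T γ)).max' (Finset.insert_nonempty a _)
  have hδγ : δ < γ := (Finset.max'_lt_iff _ _).2 (by simpa [haγ] using hT γ)
  exact (hγ δ hδγ).not_gt
    (hg δ γ fun x hx => Finset.le_max' _ x (Finset.mem_insert_of_mem hx))

theorem exists_gt_forall_subset_Iic_forall_mem_lt (hα : ℵ₀ < #α) (S : Finset α → Finset α)
    (δ : α) : ∃ ε, δ < ε ∧ ∀ B : Finset α, ↑B ⊆ Iic δ → ∀ x ∈ S B, x < ε := by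
  let U := ⋃ B : Finset (Iic δ), (S (B.map (Embedding.subtype _)) : Set α)
  have hU : #U < #α :=
    (card_iUnion_lt_iff_forall_of_isRegular (isRegular_cardinalMk hα.le)
      (mk_finset_lt hα (mk_Iic_lt hα.le δ))).2 fun B => (S _).finite_toSet.lt_aleph0.trans hα
  obtain ⟨ε, hδε, hε⟩ := exists_gt_forall_lt_of_mk_lt hα.le δ hU
  refine ⟨ε, hδε, fun B hB x hx => hε x (mem_iUnion.2 ⟨B.subtype (· ∈ Iic δ), ?_⟩)⟩
  rwa [Finset.subtype_map_of_mem hB]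

theorem exists_strictMono_mem_of_isCofinal {Z : Set α} (hZ : IsCofinal Z) (h : α → α)
    (hh : ∀ x, x ≤ h x) :
    ∃ F : α → α, StrictMono F ∧ (∀ x, F x ∈ Z) ∧ ∀ ⦃y x⦄, y < x → h (F y) < F x := by
  have step (x : α) (G : Iio x → α) : ∃ z ∈ Z, ∀ y, h (G y) < z := by
    obtain ⟨b, hb⟩ := exists_forall_lt_of_mk_lt
      (mk_range_le.trans_lt (mk_Iio_lt x ord_cardinalMk) : #(range (h ∘ G)) < #α)
    obtain ⟨z, hz, hbz⟩ := hZ b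
    exact ⟨z, hz, fun y => (hb _ ⟨y, rfl⟩).trans_le hbz⟩
  choose next hnextZ hnext using step
  let F : α → α := WellFoundedLT.fix fun x IH => next x fun y => IH y.1 y.2
  have hF (x : α) : F x = next x fun y => F y.1 := WellFoundedLT.fix_eq _ x
  have hlt : ∀ ⦃y x⦄, y < x → h (F y) < F x := fun y x hyx => by
    rw [hF x]
    exact hnext x (fun y => F y.1) ⟨y, hyx⟩
  exact ⟨F, fun y x hyx => (hh _).trans_lt (hlt hyx), fun x => hF x ▸ hnextZ x _, hlt⟩

theorem exists_strictMono_range_free (hα : ℵ₀ < #α) (S : Finset α → Finset α) :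
    ∃ e : α → α, StrictMono e ∧
      (∀ B : Finset α, ↑B ⊆ range e → ∀ x ∈ range e, x ∈ S B → ∃ b ∈ B, x ≤ b) ∧
      ∀ γ ∈ range e, ∀ x ∈ range e, x < γ → x ∉ S {γ} := by
  have := noMaxOrder_of_one_lt_mk (one_lt_aleph0.trans hα)
  obtain ⟨δ, hδ⟩ := exists_isCofinal_setOf_forall_mem_le hα (fun γ => (S {γ}).filter (· < γ))
    fun γ x hx => (Finset.mem_filter.1 hx).2
  choose h hgt hh using exists_gt_forall_subset_Iic_forall_mem_lt hα S
  obtain ⟨F, hF, hFZ, hFh⟩ :=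
    exists_strictMono_mem_of_isCofinal (hδ.inter_Ioi (h δ)) h fun x => (hgt x).le
  refine ⟨F, hF, ?_, ?_⟩
  · rintro B hB _ ⟨a, rfl⟩ hx
    by_contra! hlt
    obtain rfl | hBne := B.eq_empty_or_nonempty
    · exact (hh δ ∅ (by simp) _ hx).not_gt (hFZ a).2
    · obtain ⟨c, hc⟩ := hB (B.max'_mem hBne)
      have hca : c < a := hF.lt_iff_lt.1 (hc ▸ hlt _ (B.max'_mem hBne))
      exact (hh (F c) B (fun b hb => hc ▸ B.le_max' b hb) _ hx).not_gt (hFh hca)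
  · rintro _ ⟨a, rfl⟩ _ ⟨b, rfl⟩ hlt hmem
    exact ((hFZ a).1 _ (Finset.mem_filter.2 ⟨hmem, hlt⟩)).not_gt
      ((hgt δ).trans (hFZ b).2)

end RegularCardinalOrder

section RegressivePullback

variable {α : Type*} [LinearOrder α] (S : Finset α → Finset α) {e : α → α} (he : StrictMono e)

def regressivePullback (C : Finset α) : Finset α :=
  ((((C.image e).powerset.filter fun B => 2 ≤ B.card).biUnion S).preimage e
    he.injective.injOn).filter fun y => ∃ c ∈ C, y ≤ c

variable {S he}

theorem mem_regressivePullback {C : Finset α} {y : α} :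
    y ∈ regressivePullback S he C ↔
      (∃ B ⊆ C.image e, 2 ≤ B.card ∧ e y ∈ S B) ∧ ∃ c ∈ C, y ≤ c := by
  simp [regressivePullback, and_assoc]

theorem regressivePullback_mono {A B : Finset α} (hAB : A ⊆ B) :
    regressivePullback S he A ⊆ regressivePullback S he B := by
  intro y hy
  obtain ⟨⟨D, hD, hcard, hyD⟩, c, hc, hyc⟩ := mem_regressivePullback.1 hy
  exact mem_regressivePullback.2
    ⟨⟨D, hD.trans (Finset.image_subset_image hAB), hcard, hyD⟩, c, hAB hc, hyc⟩

theorem notMem_regressivePullback_of_forall_lt {A : Finset α} {a : α} (ha : ∀ b ∈ A, b < a) :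
    a ∉ regressivePullback S he A := fun h =>
  let ⟨_, c, hc, hac⟩ := mem_regressivePullback.1 h
  (ha c hc).not_ge hac

theorem regressivePullback_singleton (a : α) : regressivePullback S he {a} = ∅ := by
  refine Finset.eq_empty_of_forall_notMem fun y hy => ?_
  obtain ⟨⟨B, hB, hcard, -⟩, -⟩ := mem_regressivePullback.1 hy
  have := Finset.card_le_card hB
  rw [Finset.image_singleton, Finset.card_singleton] at this
  omega

theorem image_inter_image_subset_of_regressivePullback
    (hup : ∀ B : Finset α, ↑B ⊆ range e → ∀ x ∈ range e, x ∈ S B → ∃ b ∈ B, x ≤ b)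
    (hsing : ∀ γ ∈ range e, ∀ x ∈ range e, x < γ → x ∉ S {γ}) {C Y : Finset α}
    (hC : regressivePullback S he C ∩ Y ⊆ C) : S (C.image e) ∩ Y.image e ⊆ C.image e := by
  intro x hx
  obtain ⟨hxS, hxY⟩ := Finset.mem_inter.1 hx
  obtain ⟨y, hyY, rfl⟩ := Finset.mem_image.1 hxY
  obtain ⟨_, hbC, hyb⟩ := hup _ (by simp) _ (mem_range_self y) hxS
  obtain ⟨c, hcC, rfl⟩ := Finset.mem_image.1 hbC
  by_cases hcard : 2 ≤ (C.image e).card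
  · have hyC : y ∈ regressivePullback S he C :=
      mem_regressivePullback.2 ⟨⟨_, subset_rfl, hcard, hxS⟩, c, hcC, he.le_iff_le.1 hyb⟩
    exact Finset.mem_image_of_mem e (hC (Finset.mem_inter.2 ⟨hyC, hyY⟩))
  · have hCe : C.image e = {e c} :=
      Finset.eq_singleton_iff_unique_mem.2 ⟨hbC, fun z hz =>
        Finset.card_le_one.1 (by omega) z hz _ hbC⟩
    rw [hCe] at hxS ⊢
    rcases hyb.eq_or_lt with hyc | hyc
    · exact Finset.mem_singleton.2 hyc
    · exact absurd hxS (hsing _ (mem_range_self c) _ (mem_range_self y) hyc)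

end RegressivePullback

/-- Lemma 2.1 (specialS): if the freeness conclusion holds for all monotone,
regressive set-mappings vanishing on singletons, then `𝔣𝔯 𝓕 ≤ n`. -/
theorem statement2 {α : Type*} [DecidableEq α] (𝓕 : Finset (Finset α)) (n : ℕ) (hn : 1 ≤ n)
    (h : ∀ S : Finset (OmegaN n) → Finset (OmegaN n),
      (∀ A B : Finset (OmegaN n), A ⊆ B → S A ⊆ S B) →
      (∀ (A : Finset (OmegaN n)) (a : OmegaN n), A.Nonempty → (∀ b ∈ A, b < a) → a ∉ S A) →
      (∀ a : OmegaN n, S {a} = ∅) →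
      ∃ u : α → OmegaN n, Set.InjOn u ↑(𝓕.sup id) ∧
        ∀ A ∈ 𝓕, S (A.image u) ∩ (𝓕.sup id).image u ⊆ A.image u) :
    fr 𝓕 ≤ n := by
  refine Nat.sInf_le fun S => ?_
  have hreg := isRegular_aleph_natCast hn
  have := hreg.isRegularCardinalOrder_toType
  have hω : ℵ₀ < #(OmegaN n) := by
    rw [mk_toType, card_ord, aleph0_lt_aleph]
    exact_mod_cast hn
  obtain ⟨e, he, hup, hsing⟩ := exists_strictMono_range_free hω S
  obtain ⟨u, hu, hfree⟩ := h (regressivePullback S he) (fun _ _ => regressivePullback_mono)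
    (fun _ _ _ => notMem_regressivePullback_of_forall_lt) regressivePullback_singleton
  refine ⟨e ∘ u, he.injective.comp_injOn hu, fun A hA => ?_⟩
  simpa only [Finset.image_image] using
    image_inter_image_subset_of_regressivePullback hup hsing (hfree A hA)

end
end

section
/- Let 𝓕 be a finite family of finite sets. Then 𝔣𝔯(𝓕) = 0 if and only if 𝓕 is linearly ordered by inclusion, i.e., for all A, B ∈ 𝓕, either A ⊆ B or B ⊆ A. -/
/-!
If `𝓕` is a chain, embed it top-down: once its largest member `T` is placed, send the points of
`U \ T` injectively outside the finitely many values `S (u '' A)`, which is possible in any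
infinite set. Conversely, on `ω` the set mapping `F ↦ [0, max F]` forces `u '' A` to lie below
`u '' (U \ A)` for every `A ∈ 𝓕`, which is impossible for two incomparable members.

Since `sInf ∅ = 0`, one must also know that some `n` is free for `𝓕`. This is Kuratowski's free set
theorem: every set mapping on the finite subsets of a set of size `ℵ_n` has a free set of size
`n + 1`. In the inductive step, close a subset of size `ℵ_n` under the mapping and pick a point
outside the closure.
-/

open Cardinal

noncomputable section

universe u

namespace Cardinal

theorem mk_finset_le_max (α : Type u) : #(Finset α) ≤ max ℵ₀ #α := by
  classical
  exact (mk_le_of_surjective List.toFinset_surjective).trans (mk_list_le_max α)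

end Cardinal

def closureStep {β : Type u} (G : Finset β → Finset β) (D : Set β) : Set β :=
  D ∪ ⋃ B : Finset D, ↑(G (B.map (Function.Embedding.subtype _)))

theorem mk_closureStep_le {β : Type u} (G : Finset β → Finset β) {κ : Cardinal.{u}}
    (hκ : ℵ₀ ≤ κ) {D : Set β} (hD : #D ≤ κ) : #(closureStep G D) ≤ κ := by
  refine (mk_union_le _ _).trans (add_le_of_le hκ hD ?_)
  calc #(⋃ B : Finset D, (↑(G (B.map (Function.Embedding.subtype _))) : Set β))
      ≤ #(Finset D) * ℵ₀ :=
        (mk_iUnion_le _).trans (mul_le_mul_right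
          (ciSup_le' fun B => (finset_card_lt_aleph0 _).le) _)
    _ ≤ κ * ℵ₀ := mul_le_mul_left ((mk_finset_le_max D).trans (max_le hκ hD)) _
    _ = κ := mul_aleph0_eq hκ

theorem exists_superset_closed_mk_le {β : Type u} (G : Finset β → Finset β)
    {κ : Cardinal.{u}} (hκ : ℵ₀ ≤ κ) {C₀ : Set β} (hC₀ : #C₀ ≤ κ) :
    ∃ C, C₀ ⊆ C ∧ #C ≤ κ ∧ ∀ B : Finset β, ↑B ⊆ C → ↑(G B) ⊆ C := by
  classical
  set D : ℕ → Set β := fun k => (closureStep G)^[k] C₀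
  have hD_succ (k : ℕ) : D (k + 1) = closureStep G (D k) := Function.iterate_succ_apply' ..
  have hD_mono : Monotone D := monotone_nat_of_le_succ fun k => by
    rw [hD_succ]; exact Set.subset_union_left
  have hD_card (k : ℕ) : #(D k) ≤ κ := by
    induction k with
    | zero => exact hC₀
    | succ k ih => rw [hD_succ]; exact mk_closureStep_le G hκ ih
  refine ⟨⋃ k, D k, Set.subset_iUnion D 0, ?_, fun B hB => ?_⟩
  · have := mk_iUnion_le_lift D
    simp only [lift_uzero, mk_nat, lift_aleph0] at this
    exact this.trans ((mul_le_mul_right (ciSup_le' hD_card) _).trans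
      (by rw [mul_comm, mul_aleph0_eq hκ]))
  · obtain ⟨k, hk⟩ := hD_mono.directed_le.exists_mem_subset_of_finset_subset_biUnion hB
    refine Set.Subset.trans ?_ (Set.subset_iUnion D (k + 1))
    rw [hD_succ, ← Finset.subtype_map_of_mem (p := (· ∈ D k)) fun x hx => hk hx]
    exact Set.subset_union_of_subset_right
      (Set.subset_iUnion (fun B : Finset (D k) => (↑(G (B.map _)) : Set β)) _) _

def IsFreeSet {β : Type*} [DecidableEq β] (G : Finset β → Finset β) (Y : Finset β) : Prop :=
  ∀ B ⊆ Y, G B ∩ Y ⊆ B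

theorem isFreeSet_insert {β : Type*} [DecidableEq β] {G : Finset β → Finset β} {x : β}
    {Y : Finset β} (hY : IsFreeSet (fun B => G B ∪ G (insert x B)) Y)
    (hx : ∀ B ⊆ Y, x ∉ G B) : IsFreeSet G (insert x Y) := by
  intro B hB y hy
  obtain ⟨hyG, hyY⟩ := Finset.mem_inter.mp hy
  have hBY : B.erase x ⊆ Y := fun b hb =>
    (Finset.mem_insert.mp (hB (Finset.mem_of_mem_erase hb))).resolve_left
      (Finset.ne_of_mem_erase hb)
  by_cases hxB : x ∈ B
  · rcases Finset.mem_insert.mp hyY with rfl | hyY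
    · exact hxB
    have hyG' : y ∈ G (insert x (B.erase x)) := by rwa [Finset.insert_erase hxB]
    exact Finset.mem_of_mem_erase
      (hY _ hBY (Finset.mem_inter.mpr ⟨Finset.mem_union_right _ hyG', hyY⟩))
  · rw [Finset.erase_eq_of_notMem hxB] at hBY
    rcases Finset.mem_insert.mp hyY with rfl | hyY
    · exact absurd hyG (hx B hBY)
    · exact hY _ hBY (Finset.mem_inter.mpr ⟨Finset.mem_union_left _ hyG, hyY⟩)

theorem exists_isFreeSet_of_aleph_le {β : Type u} [DecidableEq β] (n : ℕ) {C : Set β}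
    (hC : ℵ_ n ≤ #C) (G : Finset β → Finset β) :
    ∃ Y : Finset β, ↑Y ⊆ C ∧ Y.card = n + 1 ∧ IsFreeSet G Y := by
  induction n generalizing C G with
  | zero =>
    have hC : C.Infinite := by
      rw [← Set.infinite_coe_iff, infinite_iff]; simpa using hC
    obtain ⟨y, hyC, hyG⟩ := (hC.sdiff (G ∅).finite_toSet).nonempty
    refine ⟨{y}, by simpa using hyC, rfl, fun B hB => ?_⟩
    rcases Finset.subset_singleton_iff.mp hB with rfl | rfl
    · rw [Finset.inter_singleton_of_notMem hyG]
    · exact Finset.inter_subset_right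
  | succ n ih =>
    have hn : ℵ_ n ≤ #C := (aleph_le_aleph.mpr (by simp)).trans hC
    obtain ⟨C₀, hC₀C, hC₀⟩ := le_mk_iff_exists_subset.mp hn
    obtain ⟨C', hC₀C', hC', hC'G⟩ :=
      exists_superset_closed_mk_le G (aleph0_le_aleph n) hC₀.le
    obtain ⟨x, hxC, hxC'⟩ : (C \ C').Nonempty := by
      by_contra! h
      have := (mk_le_mk_of_subset (Set.sdiff_eq_empty.mp h)).trans hC'
      exact absurd (hC.trans this) (by simp)
    obtain ⟨Y, hYC, hYcard, hY⟩ := ih (C := C ∩ C')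
      (hC₀.ge.trans (mk_le_mk_of_subset (Set.subset_inter hC₀C hC₀C')))
      (fun B => G B ∪ G (insert x B))
    have hxY : x ∉ Y := fun h => hxC' (hYC h).2
    refine ⟨insert x Y, ?_, by rw [Finset.card_insert_of_notMem hxY, hYcard], ?_⟩
    · rw [Finset.coe_insert]
      exact Set.insert_subset hxC (hYC.trans Set.inter_subset_left)
    · exact isFreeSet_insert hY fun B hB hxG =>
        hxC' (hC'G B ((Finset.coe_subset.mpr hB).trans (hYC.trans Set.inter_subset_right)) hxG)

instance (n : ℕ) : Infinite (OmegaN n) :=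
  infinite_iff.mpr (by rw [mk_ord_toType]; exact aleph0_le_aleph n)

theorem isFree_card_sup {α : Type*} [DecidableEq α] (𝓕 : Finset (Finset α)) :
    IsFree 𝓕 (𝓕.sup id).card := by
  intro S
  obtain ⟨Y, -, hYcard, hY⟩ := exists_isFreeSet_of_aleph_le (𝓕.sup id).card (C := Set.univ)
    (by rw [mk_univ, mk_ord_toType]) S
  obtain ⟨u, hUY, hu⟩ := (𝓕.sup id).finite_toSet.exists_injOn_of_encard_le
    (t := (Y : Set (OmegaN (𝓕.sup id).card))) (by simp [Set.encard_coe_eq_coe_finsetCard, hYcard])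
  have himage {A : Finset α} (hA : A ⊆ 𝓕.sup id) : A.image u ⊆ Y := by
    simpa [Finset.image_subset_iff] using fun a ha => hUY (hA ha)
  exact ⟨u, hu, fun A hA => (Finset.inter_subset_inter_left (himage subset_rfl)).trans
    (hY _ (himage (Finset.le_sup (f := id) hA)))⟩

theorem exists_injOn_forall_notMem {α β : Type*} [Infinite β] (U : Finset α) (E : Finset β) :
    ∃ v : α → β, Set.InjOn v U ∧ ∀ a ∈ U, v a ∉ E := by
  obtain ⟨v, hvE, hv⟩ := U.finite_toSet.exists_injOn_of_encard_le (t := (E : Set β)ᶜ)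
    (by rw [E.finite_toSet.infinite_compl.encard_eq]; exact le_top)
  exact ⟨v, hv, fun a ha => hvE ha⟩

section FreeEmbedding

variable {α β : Type*} [DecidableEq α] [DecidableEq β]

/-- `IsFree 𝓕 n` unfolds to `∀ S, ∃ u, IsFreeEmbedding 𝓕 (𝓕.sup id) S u`. -/
def IsFreeEmbedding (𝓕 : Finset (Finset α)) (U : Finset α) (S : Finset β → Finset β)
    (u : α → β) : Prop :=
  Set.InjOn u U ∧ ∀ A ∈ 𝓕, S (A.image u) ∩ U.image u ⊆ A.image u

theorem IsFreeEmbedding.exists_insert [Infinite β] {𝓕 : Finset (Finset α)} {T U : Finset α}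
    {S : Finset β → Finset β} {u₀ : α → β} (hu₀ : IsFreeEmbedding 𝓕 T S u₀)
    (h𝓕T : ∀ A ∈ 𝓕, A ⊆ T) (hTU : T ⊆ U) :
    ∃ u, IsFreeEmbedding (insert T 𝓕) U S u := by
  set E := T.image u₀ ∪ (insert T 𝓕).sup fun A => S (A.image u₀)
  obtain ⟨v, hv, hvE⟩ := exists_injOn_forall_notMem (U \ T) E
  set u := (T : Set α).piecewise u₀ v
  have hu_T : Set.EqOn u u₀ T := Set.piecewise_eqOn _ u₀ v
  have hu_UT : Set.EqOn u v ↑(U \ T) := (Set.piecewise_eqOn_compl _ u₀ v).mono fun a ha =>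
    (Finset.mem_sdiff.mp ha).2
  have hu_U (a : α) (ha : a ∈ U) (haT : a ∉ T) : u a ∉ E := by
    have ha' : a ∈ U \ T := Finset.mem_sdiff.mpr ⟨ha, haT⟩
    rw [hu_UT ha']; exact hvE a ha'
  have himage {A : Finset α} (hA : A ∈ insert T 𝓕) : A.image u = A.image u₀ := by
    refine Finset.image_congr (hu_T.mono ?_)
    rcases Finset.mem_insert.mp hA with rfl | hA
    exacts [subset_rfl, h𝓕T A hA]
  refine ⟨u, ?_, fun A hA y hy => ?_⟩
  · rw [← Finset.union_sdiff_of_subset hTU, Finset.coe_union,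
      Set.injOn_union (Finset.disjoint_coe.mpr Finset.disjoint_sdiff)]
    refine ⟨hu₀.1.congr hu_T.symm, hv.congr hu_UT.symm, ?_⟩
    intro a ha b hb hab
    refine hu_U b (Finset.mem_sdiff.mp hb).1 (Finset.mem_sdiff.mp hb).2 ?_
    rw [← hab, hu_T ha]
    exact Finset.mem_union_left _ (Finset.mem_image_of_mem u₀ ha)
  obtain ⟨hyS, hyU⟩ := Finset.mem_inter.mp hy
  rw [himage hA] at hyS ⊢
  obtain ⟨t, htU, rfl⟩ := Finset.mem_image.mp hyU
  by_cases htT : t ∈ T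
  · have hyT : u t ∈ T.image u₀ := hu_T htT ▸ Finset.mem_image_of_mem u₀ htT
    rcases Finset.mem_insert.mp hA with rfl | hA
    · exact hyT
    · exact hu₀.2 A hA (Finset.mem_inter.mpr ⟨hyS, hyT⟩)
  · exact absurd (Finset.mem_union_right _ (Finset.le_sup (f := fun A => S (A.image u₀)) hA hyS))
      (hu_U t htU htT)

theorem exists_isFreeEmbedding_of_isChain [Infinite β] (S : Finset β → Finset β)
    {𝓕 : Finset (Finset α)} (h𝓕 : IsChain (· ⊆ ·) (𝓕 : Set (Finset α))) {U : Finset α}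
    (hU : ∀ A ∈ 𝓕, A ⊆ U) : ∃ u, IsFreeEmbedding 𝓕 U S u := by
  induction 𝓕 using Finset.induction_on_max_value (ι := Finset α) Finset.card generalizing U with
  | empty =>
    obtain ⟨u, hu, -⟩ := exists_injOn_forall_notMem (β := β) U ∅
    exact ⟨u, hu, by simp⟩
  | insert T 𝓕 _ hT_max ih =>
    rw [Finset.coe_insert] at h𝓕
    have h𝓕T (A : Finset α) (hA : A ∈ 𝓕) : A ⊆ T :=
      (h𝓕.total (Set.mem_insert_of_mem _ hA) (Set.mem_insert _ _)).elim id fun hTA =>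
        (Finset.eq_of_subset_of_card_le hTA (hT_max A hA)).ge
    obtain ⟨u₀, hu₀⟩ := ih (h𝓕.mono (Set.subset_insert _ _)) h𝓕T
    exact hu₀.exists_insert h𝓕T (hU T (Finset.mem_insert_self T 𝓕))

/-- The set mapping `F ↦ {z | e z ≤ max (e '' F)}` forces `e ∘ u` to send each `A ∈ 𝓕` below
`U \ A`, which two incomparable members cannot both satisfy. -/
theorem isChain_of_forall_exists_isFreeEmbedding (e : β ≃ ℕ) {𝓕 : Finset (Finset α)}
    {U : Finset α} (hU : ∀ A ∈ 𝓕, A ⊆ U)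
    (h : ∀ S : Finset β → Finset β, ∃ u, IsFreeEmbedding 𝓕 U S u) :
    IsChain (· ⊆ ·) (𝓕 : Set (Finset α)) := by
  obtain ⟨u, hu, hfree⟩ := h fun F => (Finset.range (F.sup e + 1)).map e.symm.toEmbedding
  have hlt (A : Finset α) (hA : A ∈ 𝓕) (s t : α) (hs : s ∈ A) (htU : t ∈ U) (htA : t ∉ A) :
      e (u s) < e (u t) := by
    by_contra! hle
    have hS : u t ∈ (Finset.range ((A.image u).sup e + 1)).map e.symm.toEmbedding := by
      rw [Finset.mem_map_equiv, Equiv.symm_symm, Finset.mem_range, Nat.lt_succ_iff]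
      exact hle.trans (Finset.le_sup (f := e) (Finset.mem_image_of_mem u hs))
    obtain ⟨a, ha, hat⟩ := Finset.mem_image.mp
      (hfree A hA (Finset.mem_inter.mpr ⟨hS, Finset.mem_image_of_mem u htU⟩))
    exact htA (hu (hU A hA ha) htU hat ▸ ha)
  intro A hA B hB _
  by_contra! hAB
  obtain ⟨a, haA, haB⟩ := Finset.not_subset.mp hAB.1
  obtain ⟨b, hbB, hbA⟩ := Finset.not_subset.mp hAB.2
  exact (hlt A hA a b haA (hU B hB hbB) hbA).asymm (hlt B hB b a hbB (hU A hA haA) haB)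

end FreeEmbedding

/-- `𝔣𝔯 𝓕 = 0` iff `𝓕` is linearly ordered by inclusion. -/
theorem statement3 {α : Type*} [DecidableEq α] (𝓕 : Finset (Finset α)) :
    fr 𝓕 = 0 ↔ ∀ A ∈ 𝓕, ∀ B ∈ 𝓕, A ⊆ B ∨ B ⊆ A := by
  have hU (A : Finset α) (hA : A ∈ 𝓕) : A ⊆ 𝓕.sup id := Finset.le_sup (f := id) hA
  have hfree_zero : IsFree 𝓕 0 ↔ IsChain (· ⊆ ·) (𝓕 : Set (Finset α)) :=
    ⟨isChain_of_forall_exists_isFreeEmbedding (Cardinal.eq.mp (by simp)).some hU,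
      fun h S => exists_isFreeEmbedding_of_isChain S h hU⟩
  rw [fr, Nat.sInf_eq_zero, or_iff_left (Set.nonempty_of_mem (isFree_card_sup 𝓕)).ne_empty,
    Set.mem_ofPred_eq, hfree_zero]
  exact ⟨fun h A hA B hB => h.total hA hB, fun h A hA B hB _ => h A hA B hB⟩

end
end

section
/- Let m ≥ 2 and let ≺ be a linear order on {1,…,m−1}. Suppose there exists t ∈ {1,…,m−1} such that t ≺ t+1 ≺ t+2 ≺ ⋯ ≺ m−1 and t ≺ t−1 ≺ t−2 ≺ ⋯ ≺ 1. Then 𝔣𝔯(𝓕[≺]) ≤ 1. -/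
open Cardinal

noncomputable section

/-!
Extend `≺` by putting `m` last and place `1, …, m` into `ω₁` one at a time in this order.
If `A ∈ 𝓕[≺]` and `j ∉ A` lies below `M = max A`, then every other point of `A` precedes `j`, so
`y j ∉ S (y '' A)` can be arranged when the later of `j` and `M` is placed: if that is `j`, it
avoids finitely many values; if it is `M`, then `M > t`, and each point `> t` keeps an uncountable
pool of admissible images, which survives the placement of `j` for all but finitely many choices
of `y j`. If instead `A` lies below `j`, a ladder in `ω₁` takes care of it: every point `p ≤ t`
goes to the `p`-th block, which lies above `S` of all finite sets below the block, and every point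
`> t` goes above the blocks and above `S` of all finite sets of blocks and earlier points (the
points of `A` above `t` precede `j`).
-/
open Set

local notation "ω₁" => OmegaN 1

namespace OmegaN

lemma countable_Iic (x : ω₁) : (Iic x).Countable := by
  have hIio : (Iio x).Countable := by
    rw [← Cardinal.le_aleph0_iff_set_countable, ← Cardinal.lt_aleph_one_iff]
    simpa using Cardinal.mk_Iio_lt x (by simp)
  rw [← Iio_insert]
  exact hIio.insert x

lemma not_countable_univ : ¬ (univ : Set ω₁).Countable := by
  rw [← Cardinal.le_aleph0_iff_set_countable, Cardinal.mk_univ, Cardinal.mk_toType,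
    Cardinal.card_ord]
  simp

lemma exists_forall_lt_of_countable {C : Set ω₁} (hC : C.Countable) : ∃ b, ∀ x ∈ C, x < b := by
  by_contra! h
  refine not_countable_univ ((hC.biUnion fun x _ => countable_Iic x).mono fun b _ => ?_)
  simpa using h b

lemma not_countable_inter_Ici {B : Set ω₁} (hB : ¬ B.Countable) (x : ω₁) :
    ¬ (B ∩ Ici x).Countable := fun h =>
  hB <| (h.union (countable_Iic x)).mono fun z hz =>
    (le_total x z).elim (fun hxz => Or.inl ⟨hz, hxz⟩) Or.inr

lemma exists_infinite_Ico (a : ω₁) : ∃ b, (Ico a b).Infinite := by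
  have hinf : (Ici a).Infinite := fun h =>
    not_countable_inter_Ici not_countable_univ a (by simpa using h.countable)
  let e := hinf.natEmbedding
  obtain ⟨b, hb⟩ := exists_forall_lt_of_countable (countable_range fun n => (e n : ω₁))
  refine ⟨b, (infinite_range_of_injective (f := fun n => (e n : ω₁))
    (Subtype.val_injective.comp e.injective)).mono ?_⟩
  rintro _ ⟨n, rfl⟩
  exact ⟨(e n).2, hb _ ⟨n, rfl⟩⟩

end OmegaN

structure Ladder (S : Finset ω₁ → Finset ω₁) where
  jump : ω₁ → ω₁
  lt_jump : ∀ x, x < jump x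
  subset_Iio_jump : ∀ x (F : Finset ω₁), ↑F ⊆ Iic x → ↑(S F) ⊆ Iio (jump x)
  rung : ℕ → ω₁
  infinite_block : ∀ n, (Ico (jump (rung n)) (rung (n + 1))).Infinite

namespace Ladder

lemma exists_jump (S : Finset ω₁ → Finset ω₁) (x : ω₁) :
    ∃ b, x < b ∧ ∀ F : Finset ω₁, ↑F ⊆ Iic x → ↑(S F) ⊆ Iio b := by
  have hfin : {F : Finset ω₁ | ↑F ⊆ Iic x}.Countable :=
    ((countable_ofPred_finite_subset (OmegaN.countable_Iic x)).preimage
      Finset.coe_injective).mono fun F hF =>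
      show (↑F : Set ω₁).Finite ∧ ↑F ⊆ Iic x from ⟨F.finite_toSet, hF⟩
  obtain ⟨b, hb⟩ := OmegaN.exists_forall_lt_of_countable
    ((OmegaN.countable_Iic x).union (hfin.biUnion fun F _ => (S F).countable_toSet))
  exact ⟨b, hb x (Or.inl (mem_Iic.2 le_rfl)), fun F hF s hs => hb s (Or.inr (mem_biUnion hF hs))⟩

lemma nonempty (S : Finset ω₁ → Finset ω₁) : Nonempty (Ladder S) := by
  choose jump hjump using exists_jump S
  choose next hnext using OmegaN.exists_infinite_Ico
  obtain ⟨x₀, -⟩ : (univ : Set ω₁).Nonempty :=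
    nonempty_iff_ne_empty.2 fun h => OmegaN.not_countable_univ (h ▸ countable_empty)
  exact ⟨⟨jump, fun x => (hjump x).1, fun x => (hjump x).2,
    fun n => Nat.rec x₀ (fun _ r => next (jump r)) n, fun n => hnext _⟩⟩

variable {S : Finset ω₁ → Finset ω₁} (L : Ladder S)

lemma rung_strictMono : StrictMono L.rung :=
  strictMono_nat_of_lt_succ fun n => by
    obtain ⟨x, hx⟩ := (L.infinite_block n).nonempty
    exact ((L.lt_jump _).trans_le hx.1).trans hx.2

lemma notMem_of_subset_Iic {b x : ω₁} {F : Finset ω₁} (hF : ↑F ⊆ Iic b) (hx : L.jump b ≤ x) :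
    x ∉ S F := fun h => (L.subset_Iio_jump b F hF h).not_ge hx

end Ladder

/-- Were there infinitely many such `w`, a point `z ∈ B` outside the countable exceptional sets of
an injective sequence of them would put every term of the sequence into the finite set
`⋃ A, S (insert z (F A))`. -/
lemma finite_setOf_countable_notMem_insert {α β : Type*} [DecidableEq α]
    (S : Finset α → Finset α) {B : Set α} (hB : ¬ B.Countable) (𝒜 : Finset β) (Q : β → Prop)
    (F : β → Finset α) :
    {w | {z ∈ B | ∀ A ∈ 𝒜, Q A → w ∉ S (insert z (F A))}.Countable}.Finite := by
  by_contra hinf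
  let e := Set.Infinite.natEmbedding _ hinf
  obtain ⟨z, hzB, hz⟩ := not_subset.1 fun h =>
    hB ((countable_iUnion fun n => (e n).2).mono h)
  have hmem : ∀ n, (e n : α) ∈ 𝒜.biUnion fun A => S (insert z (F A)) := by
    intro n
    by_contra hn
    refine hz (mem_iUnion.2 ⟨n, hzB, fun A hA _ hw => hn ?_⟩)
    exact Finset.mem_biUnion.2 ⟨A, hA, hw⟩
  exact (infinite_range_of_injective (Subtype.val_injective.comp e.injective)).mono
    (range_subset_iff.2 hmem) (Finset.finite_toSet _)

lemma Finset.image_update_of_mem {α β : Type*} [DecidableEq α] [DecidableEq β] {A : Finset α}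
    {p : α} (hp : p ∈ A) (y : α → β) (w : β) :
    A.image (Function.update y p w) = insert w ((A.erase p).image y) := by
  conv_lhs => rw [← Finset.insert_erase hp]
  rw [Finset.image_insert, Function.update_self,
    Finset.image_congr fun x hx => Function.update_of_ne (Finset.ne_of_mem_erase hx) _ _]

/-- The points of `P` are placed into `ω₁` in increasing order of `key`. -/
structure IsSchedule (P : Finset ℕ) (t : ℕ) (𝓕 : Finset (Finset ℕ)) (key : ℕ → ℕ) : Prop where
  injOn : InjOn key P
  key_anti : ∀ a ∈ P, ∀ b ∈ P, a < b → b ≤ t → key b < key a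
  key_mono : ∀ a ∈ P, ∀ b ∈ P, t < a → a < b → key a < key b
  subset : ∀ A ∈ 𝓕, A ⊆ P
  key_lt_of_notMem : ∀ A ∈ 𝓕, ∀ j ∈ P, j ∉ A → ∀ M ∈ A, ∀ x ∈ A, x < M → j < M → key x < key j

def admissible (𝓕 : Finset (Finset ℕ)) (S : Finset ω₁ → Finset ω₁) (y : ℕ → ω₁) (M j : ℕ)
    (v : ω₁) : Set ω₁ :=
  {z | ∀ A ∈ 𝓕, IsGreatest (↑A) M ∧ j ∉ A ∧ j < M → v ∉ S (insert z ((A.erase M).image y))}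

def pool (𝓕 : Finset (Finset ℕ)) (S : Finset ω₁ → Finset ω₁) (D : Finset ℕ) (y : ℕ → ω₁)
    (M : ℕ) : Set ω₁ :=
  {z | ∀ j ∈ D, z ∈ admissible 𝓕 S y M j (y j)}

section Placement

variable {S : Finset ω₁ → Finset ω₁} {P : Finset ℕ} {t : ℕ} {𝓕 : Finset (Finset ℕ)}
  {key : ℕ → ℕ} {L : Ladder S} {D : Finset ℕ} {y : ℕ → ω₁}

structure Placed (t : ℕ) (key : ℕ → ℕ) (L : Ladder S) (D : Finset ℕ) (y : ℕ → ω₁) : Prop where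
  mem_block : ∀ p ∈ D, p ≤ t → y p ∈ Ico (L.jump (L.rung p)) (L.rung (p + 1))
  exists_jump_le : ∀ p ∈ D, t < p →
    ∃ b, L.rung (t + 1) ≤ b ∧ (∀ q ∈ D, key q < key p → y q ≤ b) ∧ L.jump b ≤ y p
  injOn : InjOn y D

structure Extendable (P : Finset ℕ) (t : ℕ) (𝓕 : Finset (Finset ℕ)) (key : ℕ → ℕ) (L : Ladder S)
    (D : Finset ℕ) (y : ℕ → ω₁) : Prop extends Placed t key L D y where
  notMem : ∀ A ∈ 𝓕, A ⊆ D → ∀ j ∈ D, j ∉ A → y j ∉ S (A.image y)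
  not_countable_pool : ∀ M ∈ P, M ∉ D → t < M → ¬ (pool 𝓕 S D y M).Countable

lemma Placed.notMem_of_forall_lt (h : Placed t key L D y) (sch : IsSchedule P t 𝓕 key)
    (hDP : D ⊆ P) {A : Finset ℕ} {j : ℕ} (hA : A ⊆ D) (hj : j ∈ D) (hAj : ∀ x ∈ A, x < j) :
    y j ∉ S (A.image y) := by
  have hlow : ∀ x ∈ D, ∀ n, x < n → x ≤ t → y x ≤ L.rung n := fun x hx n hxn hxt =>
    ((h.mem_block x hx hxt).2.trans_le (L.rung_strictMono.monotone hxn)).le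
  rcases le_or_gt j t with hjt | hjt
  · refine L.notMem_of_subset_Iic ?_ (h.mem_block j hj hjt).1
    rw [Finset.coe_image, image_subset_iff]
    exact fun x hx => hlow x (hA hx) j (hAj x hx) ((hAj x hx).le.trans hjt)
  · obtain ⟨b, htb, hb, hjb⟩ := h.exists_jump_le j hj hjt
    refine L.notMem_of_subset_Iic ?_ hjb
    rw [Finset.coe_image, image_subset_iff]
    intro x hx
    rcases le_or_gt x t with hxt | hxt
    · exact (hlow x (hA hx) (t + 1) (Nat.lt_succ_of_le hxt) hxt).trans htb
    · exact hb x (hA hx) (sch.key_mono x (hDP (hA hx)) j (hDP hj) hxt (hAj x hx))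

lemma Placed.insert_update (h : Placed t key L D y) {p : ℕ} (hkey : ∀ q ∈ D, key q < key p)
    {w : ω₁} (hw_block : p ≤ t → w ∈ Ico (L.jump (L.rung p)) (L.rung (p + 1)))
    (hw_jump : t < p → ∃ b, L.rung (t + 1) ≤ b ∧ (∀ q ∈ D, y q ≤ b) ∧ L.jump b ≤ w)
    (hw_new : w ∉ y '' D) : Placed t key L (insert p D) (Function.update y p w) := by
  have hpD : p ∉ D := fun hp => (hkey p hp).false
  have hy : ∀ q ∈ D, Function.update y p w q = y q := fun q hq =>
    Function.update_of_ne (ne_of_mem_of_not_mem hq hpD) _ _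
  refine ⟨fun q hq hqt => ?_, fun q hq hqt => ?_, ?_⟩
  · rcases Finset.mem_insert.1 hq with rfl | hqD
    · simpa using hw_block hqt
    · rw [hy q hqD]
      exact h.mem_block q hqD hqt
  · rcases Finset.mem_insert.1 hq with rfl | hqD
    · obtain ⟨b, htb, hb, hwb⟩ := hw_jump hqt
      refine ⟨b, htb, fun r hr hrq => ?_, by simpa using hwb⟩
      rcases Finset.mem_insert.1 hr with rfl | hr
      · exact absurd hrq (lt_irrefl _)
      · rw [hy r hr]
        exact hb r hr
    · obtain ⟨b, htb, hb, hqb⟩ := h.exists_jump_le q hqD hqt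
      refine ⟨b, htb, fun r hr hrq => ?_, by rwa [hy q hqD]⟩
      rcases Finset.mem_insert.1 hr with rfl | hr
      · exact absurd (hrq.trans (hkey q hqD)) (lt_irrefl _)
      · rw [hy r hr]
        exact hb r hr hrq
  · rw [Finset.coe_insert, injOn_insert (by simpa using hpD), Function.update_self,
      image_congr fun q hq => hy q hq]
    exact ⟨h.injOn.congr fun q hq => (hy q hq).symm, hw_new⟩

lemma subset_pool_insert_update (sch : IsSchedule P t 𝓕 key) {p : ℕ} (hp : p ∈ P)
    (hD : ∀ q, q ∈ D ↔ q ∈ P ∧ key q < key p) (M : ℕ) (w : ω₁) :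
    pool 𝓕 S D y M ∩ admissible 𝓕 S y M p w ⊆
      pool 𝓕 S (insert p D) (Function.update y p w) M := by
  have hpD : p ∉ D := fun h => ((hD p).1 h).2.false
  rintro z ⟨hz, hzp⟩ j hj A hA ⟨hMA, hjA, hjM⟩
  have hjP : j ∈ P := (Finset.mem_insert.1 hj).elim (· ▸ hp) fun h => ((hD j).1 h).1
  have hkj : key j ≤ key p :=
    (Finset.mem_insert.1 hj).elim (fun h => h ▸ le_rfl) fun h => ((hD j).1 h).2.le
  -- the rest of `A` precedes `j`, hence is placed before `p`
  have herase : (A.erase M).image (Function.update y p w) = (A.erase M).image y := by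
    refine Finset.image_congr fun x hx => Function.update_of_ne (fun hxp => ?_) _ _
    obtain ⟨hxM, hxA⟩ := Finset.mem_erase.1 hx
    have := sch.key_lt_of_notMem A hA j hjP hjA M hMA.1 x hxA ((hMA.2 hxA).lt_of_ne hxM) hjM
    exact (hxp ▸ this).not_ge hkj
  rw [herase]
  rcases Finset.mem_insert.1 hj with rfl | hjD
  · rw [Function.update_self]
    exact hzp A hA ⟨hMA, hjA, hjM⟩
  · rw [Function.update_of_ne (ne_of_mem_of_not_mem hjD hpD)]
    exact hz j hjD A hA ⟨hMA, hjA, hjM⟩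

lemma Extendable.notMem_insert_update (hG : Extendable P t 𝓕 key L D y)
    (sch : IsSchedule P t 𝓕 key) {p : ℕ} (hp : p ∈ P) (hD : ∀ q, q ∈ D ↔ q ∈ P ∧ key q < key p)
    {w : ω₁} (hplaced : Placed t key L (insert p D) (Function.update y p w))
    (hw_free : ∀ A ∈ 𝓕, A ⊆ D → w ∉ S (A.image y)) (hw_pool : t < p → w ∈ pool 𝓕 S D y p)
    {A : Finset ℕ} (hA : A ∈ 𝓕) (hAD : A ⊆ insert p D) {j : ℕ} (hj : j ∈ insert p D)
    (hjA : j ∉ A) : Function.update y p w j ∉ S (A.image (Function.update y p w)) := by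
  have hkey : ∀ q ∈ D, key q < key p := fun q hq => ((hD q).1 hq).2
  have hDP : D ⊆ P := fun q hq => ((hD q).1 hq).1
  have hpD : p ∉ D := fun h => (hkey p h).false
  have hy : ∀ q ≠ p, Function.update y p w q = y q := fun q hq => Function.update_of_ne hq _ _
  by_cases hpA : p ∉ A
  · have hAD' : A ⊆ D := (Finset.subset_insert_iff_of_notMem hpA).1 hAD
    rw [Finset.image_congr fun x hx => hy x (ne_of_mem_of_not_mem hx hpA)]
    rcases Finset.mem_insert.1 hj with rfl | hjD
    · rw [Function.update_self]
      exact hw_free A hA hAD'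
    · rw [hy j (ne_of_mem_of_not_mem hjD hpD)]
      exact hG.notMem A hA hAD' j hjD hjA
  rw [not_not] at hpA
  have hjp : j ≠ p := fun h => hjA (h ▸ hpA)
  have hjD : j ∈ D := (Finset.mem_insert.1 hj).resolve_left hjp
  by_cases hlt : ∀ x ∈ A, x < j
  · exact hplaced.notMem_of_forall_lt sch (Finset.insert_subset hp hDP) hAD hj hlt
  -- otherwise `j` is below the maximum `M` of `A`, and only `M = p` is compatible with the
  -- placing order
  push Not at hlt
  obtain ⟨x, hxA, hjx⟩ := hlt
  have hMA := Finset.isGreatest_max' A ⟨p, hpA⟩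
  set M := A.max' ⟨p, hpA⟩
  have hjM : j < M := (hjx.lt_of_ne fun h => hjA (h ▸ hxA)).trans_le (hMA.2 hxA)
  rcases eq_or_ne M p with hMp | hMp
  · rw [hMp] at hMA hjM
    have htp : t < p := by
      by_contra! hpt
      exact (sch.key_anti j (hDP hjD) p hp hjM hpt).asymm (hkey j hjD)
    rw [Finset.image_update_of_mem hpA, hy j hjp]
    exact hw_pool htp j hjD A hA ⟨hMA, hjA, hjM⟩
  · exact absurd (sch.key_lt_of_notMem A hA j (hDP hjD) hjA M hMA.1 p hpA
      ((hMA.2 hpA).lt_of_ne (Ne.symm hMp)) hjM) (hkey j hjD).asymm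

lemma Extendable.insert_update (hG : Extendable P t 𝓕 key L D y) (sch : IsSchedule P t 𝓕 key)
    {p : ℕ} (hp : p ∈ P) (hD : ∀ q, q ∈ D ↔ q ∈ P ∧ key q < key p) {w : ω₁}
    (hplaced : Placed t key L (insert p D) (Function.update y p w))
    (hw_free : ∀ A ∈ 𝓕, A ⊆ D → w ∉ S (A.image y)) (hw_pool : t < p → w ∈ pool 𝓕 S D y p)
    (hw_pools : ∀ M ∈ P, M ∉ D → t < M →
      ¬ (pool 𝓕 S D y M ∩ admissible 𝓕 S y M p w).Countable) :
    Extendable P t 𝓕 key L (insert p D) (Function.update y p w) where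
  toPlaced := hplaced
  notMem _ hA hAD _ hj hjA :=
    hG.notMem_insert_update sch hp hD hplaced hw_free hw_pool hA hAD hj hjA
  not_countable_pool M hMP hMD hMt hcount :=
    hw_pools M hMP (fun h => hMD (Finset.mem_insert_of_mem h)) hMt
      (hcount.mono (subset_pool_insert_update sch hp hD M w))

lemma Extendable.exists_insert (hG : Extendable P t 𝓕 key L D y) (sch : IsSchedule P t 𝓕 key)
    {p : ℕ} (hp : p ∈ P) (hD : ∀ q, q ∈ D ↔ q ∈ P ∧ key q < key p) :
    ∃ w, Extendable P t 𝓕 key L (insert p D) (Function.update y p w) := by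
  have hkey : ∀ q ∈ D, key q < key p := fun q hq => ((hD q).1 hq).2
  have hpD : p ∉ D := fun h => (hkey p h).false
  obtain ⟨b, hb⟩ := OmegaN.exists_forall_lt_of_countable
    ((Set.Finite.insert (L.rung (t + 1)) (D.finite_toSet.image y)).countable)
  let C : Set ω₁ := {w | (p ≤ t → w ∈ Ico (L.jump (L.rung p)) (L.rung (p + 1))) ∧
    (t < p → w ∈ pool 𝓕 S D y p ∧ L.jump b ≤ w)}
  have hC : C.Infinite := by
    rcases le_or_gt p t with hpt | htp
    · exact (L.infinite_block p).mono fun w hw => ⟨fun _ => hw, fun h => absurd hpt h.not_ge⟩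
    · refine fun hfin => OmegaN.not_countable_inter_Ici (hG.not_countable_pool p hp hpD htp)
        (L.jump b) (hfin.subset fun w hw => ⟨fun h => absurd htp h.not_gt, fun _ => hw⟩).countable
  let Λ : Set ω₁ := ⋃ A ∈ 𝓕, ⋃ (_ : A ⊆ D), ↑(S (A.image y))
  let bad : Set ω₁ := ⋃ M ∈ P.filter (fun M => M ∉ D ∧ t < M),
    {w | (pool 𝓕 S D y M ∩ admissible 𝓕 S y M p w).Countable}
  have hΛ : Λ.Finite :=
    𝓕.finite_toSet.biUnion fun A _ => finite_iUnion fun _ => Finset.finite_toSet _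
  have hbad : bad.Finite := (Finset.finite_toSet _).biUnion fun M hM => by
    obtain ⟨hMP, hMD, hMt⟩ := Finset.mem_filter.1 hM
    exact finite_setOf_countable_notMem_insert S (hG.not_countable_pool M hMP hMD hMt) 𝓕 _ _
  obtain ⟨w, ⟨hw_block, hw_high⟩, hw⟩ :=
    hC.exists_notMem_finite ((hΛ.union (D.finite_toSet.image y)).union hbad)
  simp only [mem_union, not_or] at hw
  obtain ⟨⟨hwΛ, hw_new⟩, hw_bad⟩ := hw
  refine ⟨w, hG.insert_update sch hp hD (hG.toPlaced.insert_update hkey hw_block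
    (fun htp => ⟨b, (hb _ (mem_insert _ _)).le,
      fun q hq => (hb _ (mem_insert_of_mem _ ⟨q, hq, rfl⟩)).le, (hw_high htp).2⟩) hw_new)
    (fun A hA hAD hwA => hwΛ (mem_biUnion hA (mem_iUnion.2 ⟨hAD, hwA⟩)))
    (fun htp => (hw_high htp).1)
    fun M hMP hMD hMt hcount => hw_bad (mem_biUnion (Finset.mem_filter.2 ⟨hMP, hMD, hMt⟩) hcount)⟩

lemma extendable_empty (y : ℕ → ω₁) : Extendable P t 𝓕 key L ∅ y where
  mem_block := by simp
  exists_jump_le := by simp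
  injOn := by simp
  notMem := by simp
  not_countable_pool _ _ _ _ := by simpa [pool] using OmegaN.not_countable_univ

lemma exists_extendable (sch : IsSchedule P t 𝓕 key) (L : Ladder S) (k : ℕ) :
    ∃ y, Extendable P t 𝓕 key L (P.filter (key · < k)) y := by
  induction k with
  | zero => exact ⟨fun _ => L.rung 0, by simpa using extendable_empty _⟩
  | succ k ih =>
    obtain ⟨y, hy⟩ := ih
    by_cases hk : ∃ p ∈ P, key p = k
    · obtain ⟨p, hp, rfl⟩ := hk
      have hins : P.filter (key · < key p + 1) = insert p (P.filter (key · < key p)) := by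
        ext q
        simp only [Finset.mem_filter, Finset.mem_insert, Nat.lt_succ_iff_lt_or_eq]
        constructor
        · rintro ⟨hq, hlt | heq⟩
          exacts [Or.inr ⟨hq, hlt⟩, Or.inl (sch.injOn hq hp heq)]
        · rintro (rfl | ⟨hq, hlt⟩)
          exacts [⟨hp, Or.inr rfl⟩, ⟨hq, Or.inl hlt⟩]
      obtain ⟨w, hw⟩ := hy.exists_insert sch hp fun q => Finset.mem_filter
      exact ⟨_, hins ▸ hw⟩
    · have hsame : P.filter (key · < k + 1) = P.filter (key · < k) :=
        Finset.filter_congr fun q hq => ⟨fun h => (Nat.lt_succ_iff.1 h).lt_of_ne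
          fun h' => hk ⟨q, hq, h'⟩, fun h => h.trans (Nat.lt_succ_self k)⟩
      exact ⟨y, hsame ▸ hy⟩

end Placement

theorem IsSchedule.isFree_one {P : Finset ℕ} {t : ℕ} {𝓕 : Finset (Finset ℕ)} {key : ℕ → ℕ}
    (sch : IsSchedule P t 𝓕 key) : IsFree 𝓕 1 := by
  intro S
  obtain ⟨L⟩ := Ladder.nonempty S
  obtain ⟨y, hy⟩ := exists_extendable sch L (P.sup key + 1)
  rw [Finset.filter_true_of_mem fun q hq => Nat.lt_succ_of_le (Finset.le_sup hq)] at hy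
  have hsup : 𝓕.sup id ⊆ P := Finset.sup_le fun A hA => sch.subset A hA
  refine ⟨y, hy.injOn.mono hsup, fun A hA x hx => ?_⟩
  rw [Finset.mem_inter, Finset.mem_image] at hx
  obtain ⟨hxS, j, hj, rfl⟩ := hx
  by_contra hjA
  exact hy.notMem A hA (sch.subset A hA) j (hsup hj) (fun h => hjA (Finset.mem_image_of_mem y h))
    hxS

lemma ncard_sep_lt_ncard_sep {α : Type*} {s : Set α} (hs : s.Finite) {r : α → α → Prop}
    (hirr : ∀ a ∈ s, ¬ r a a) (htrans : ∀ a ∈ s, ∀ b ∈ s, ∀ c ∈ s, r a b → r b c → r a c)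
    {a b : α} (ha : a ∈ s) (hb : b ∈ s) (hab : r a b) :
    {x ∈ s | r x a}.ncard < {x ∈ s | r x b}.ncard := by
  have hsub : {x ∈ s | r x a} ⊆ {x ∈ s | r x b} := fun x hx =>
    ⟨hx.1, htrans x hx.1 a ha b hb hx.2 hab⟩
  exact ncard_lt_ncard ((ssubset_iff_of_subset hsub).2 ⟨a, ⟨ha, hab⟩, fun h => hirr a ha h.2⟩)
    (hs.subset (sep_subset _ _))

def precKey (m : ℕ) (prec : ℕ → ℕ → Prop) (a : ℕ) : ℕ :=
  if a = m then m else {b ∈ (Finset.Icc 1 (m - 1) : Set ℕ) | prec b a}.ncard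

section PrecKey

variable {m : ℕ} {prec : ℕ → ℕ → Prop}

lemma precKey_self : precKey m prec m = m := if_pos rfl

lemma ne_of_mem_Icc_sub_one {a : ℕ} (ha : a ∈ Finset.Icc 1 (m - 1)) : a ≠ m := by grind

lemma precKey_lt_precKey (hirr : ∀ a ∈ Finset.Icc 1 (m - 1), ¬prec a a)
    (htrans : ∀ a ∈ Finset.Icc 1 (m - 1), ∀ b ∈ Finset.Icc 1 (m - 1),
      ∀ c ∈ Finset.Icc 1 (m - 1), prec a b → prec b c → prec a c)
    {a b : ℕ} (ha : a ∈ Finset.Icc 1 (m - 1)) (hb : b ∈ Finset.Icc 1 (m - 1)) (hab : prec a b) :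
    precKey m prec a < precKey m prec b := by
  rw [precKey, precKey, if_neg (ne_of_mem_Icc_sub_one ha), if_neg (ne_of_mem_Icc_sub_one hb)]
  exact ncard_sep_lt_ncard_sep (Finset.finite_toSet _) hirr htrans ha hb hab

lemma precKey_lt_self {a : ℕ} (ha : a ∈ Finset.Icc 1 (m - 1)) : precKey m prec a < m := by
  rw [precKey, if_neg (ne_of_mem_Icc_sub_one ha)]
  calc {b ∈ (Finset.Icc 1 (m - 1) : Set ℕ) | prec b a}.ncard
      ≤ (Finset.Icc 1 (m - 1) : Set ℕ).ncard :=
        ncard_le_ncard (sep_subset _ _) (Finset.finite_toSet _)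
    _ < m := by
      rw [ncard_coe_finset, Nat.card_Icc]
      grind

lemma precKey_injOn (hirr : ∀ a ∈ Finset.Icc 1 (m - 1), ¬prec a a)
    (htrans : ∀ a ∈ Finset.Icc 1 (m - 1), ∀ b ∈ Finset.Icc 1 (m - 1),
      ∀ c ∈ Finset.Icc 1 (m - 1), prec a b → prec b c → prec a c)
    (htot : ∀ a ∈ Finset.Icc 1 (m - 1), ∀ b ∈ Finset.Icc 1 (m - 1), a ≠ b →
      prec a b ∨ prec b a) :
    InjOn (precKey m prec) (Finset.Icc 1 m) := by
  have hlast : ∀ a ∈ Finset.Icc 1 m, a ≠ m → a ∈ Finset.Icc 1 (m - 1) := by grind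
  intro a ha b hb hab
  by_contra hne
  rcases eq_or_ne a m with rfl | ham
  · exact (precKey_lt_self (hlast b hb (Ne.symm hne))).ne (hab.symm.trans precKey_self)
  rcases eq_or_ne b m with rfl | hbm
  · exact (precKey_lt_self (hlast a ha ham)).ne (hab.trans precKey_self)
  rcases htot a (hlast a ha ham) b (hlast b hb hbm) hne with h | h
  · exact (precKey_lt_precKey hirr htrans (hlast a ha ham) (hlast b hb hbm) h).ne hab
  · exact (precKey_lt_precKey hirr htrans (hlast b hb hbm) (hlast a ha ham) h).ne hab.symm

theorem isSchedule_precKey {t : ℕ} {𝓕 : Finset (Finset ℕ)}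
    (hirr : ∀ a ∈ Finset.Icc 1 (m - 1), ¬prec a a)
    (htrans : ∀ a ∈ Finset.Icc 1 (m - 1), ∀ b ∈ Finset.Icc 1 (m - 1),
      ∀ c ∈ Finset.Icc 1 (m - 1), prec a b → prec b c → prec a c)
    (htot : ∀ a ∈ Finset.Icc 1 (m - 1), ∀ b ∈ Finset.Icc 1 (m - 1), a ≠ b →
      prec a b ∨ prec b a)
    (ht : t ∈ Finset.Icc 1 (m - 1))
    (hup : ∀ s, t ≤ s → s + 1 ≤ m - 1 → prec s (s + 1))
    (hdown : ∀ s, 2 ≤ s → s ≤ t → prec s (s - 1))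
    (h𝓕 : ∀ A : Finset ℕ, A ∈ 𝓕 ↔ (A ⊆ Finset.Icc 1 m ∧
      ∀ t₁ ∈ Finset.Icc 1 m, ∀ t₂ ∈ Finset.Icc 1 m, ∀ t₃ ∈ Finset.Icc 1 m,
        t₂ < t₁ → t₃ < t₁ → prec t₃ t₂ → t₁ ∈ A → t₂ ∈ A → t₃ ∈ A)) :
    IsSchedule (Finset.Icc 1 m) t 𝓕 (precKey m prec) := by
  rw [Finset.mem_Icc] at ht
  have hmem : ∀ a, 1 ≤ a → a ≤ m - 1 → a ∈ Finset.Icc 1 (m - 1) := fun a h1 h2 =>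
    Finset.mem_Icc.2 ⟨h1, h2⟩
  have hanti : StrictAntiOn (precKey m prec) (Icc 1 t) :=
    strictAntiOn_of_add_one_lt ordConnected_Icc fun a _ ha ha1 =>
      precKey_lt_precKey hirr htrans (hmem _ (by omega) (by grind)) (hmem _ ha.1 (by grind))
        (by simpa using hdown (a + 1) (by grind) ha1.2)
  have hmono : StrictMonoOn (precKey m prec) (Icc t m) := by
    refine strictMonoOn_of_lt_add_one ordConnected_Icc fun a _ ⟨hta, _⟩ ⟨_, ham⟩ => ?_
    rcases eq_or_ne (a + 1) m with hm | hm
    · rw [hm, precKey_self]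
      exact precKey_lt_self (hmem _ (by omega) (by omega))
    · exact precKey_lt_precKey hirr htrans (hmem _ (by omega) (by omega))
        (hmem _ (by omega) (by omega)) (hup a hta (by omega))
  refine ⟨precKey_injOn hirr htrans htot, fun a ha b hb hab hbt => ?_,
    fun a ha b hb hta hab => ?_, fun A hA => ((h𝓕 A).1 hA).1, ?_⟩
  · rw [Finset.mem_Icc] at ha hb
    exact hanti ⟨ha.1, by omega⟩ ⟨hb.1, hbt⟩ hab
  · rw [Finset.mem_Icc] at ha hb
    exact hmono ⟨hta.le, ha.2⟩ ⟨by omega, hb.2⟩ hab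
  · intro A hA j hj hjA M hM x hx hxM hjM
    obtain ⟨hAP, hclosed⟩ := (h𝓕 A).1 hA
    have hMm := (Finset.mem_Icc.1 (hAP hM)).2
    have hxI := hmem x (Finset.mem_Icc.1 (hAP hx)).1 (by omega)
    have hjI := hmem j (Finset.mem_Icc.1 hj).1 (by omega)
    rcases htot x hxI j hjI fun h => hjA (h ▸ hx) with h | h
    · exact precKey_lt_precKey hirr htrans hxI hjI h
    · exact absurd (hclosed M (hAP hM) x (hAP hx) j hj hxM hjM h hM hx) hjA

end PrecKey

theorem statement19_general (m : ℕ) (prec : ℕ → ℕ → Prop)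
    (hirr : ∀ a ∈ Finset.Icc 1 (m - 1), ¬prec a a)
    (htrans : ∀ a ∈ Finset.Icc 1 (m - 1), ∀ b ∈ Finset.Icc 1 (m - 1),
      ∀ c ∈ Finset.Icc 1 (m - 1), prec a b → prec b c → prec a c)
    (htot : ∀ a ∈ Finset.Icc 1 (m - 1), ∀ b ∈ Finset.Icc 1 (m - 1), a ≠ b →
      prec a b ∨ prec b a)
    (t : ℕ) (ht : t ∈ Finset.Icc 1 (m - 1))
    (hup : ∀ s, t ≤ s → s + 1 ≤ m - 1 → prec s (s + 1))
    (hdown : ∀ s, 2 ≤ s → s ≤ t → prec s (s - 1))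
    (𝓕 : Finset (Finset ℕ))
    (h𝓕 : ∀ A : Finset ℕ, A ∈ 𝓕 ↔ (A ⊆ Finset.Icc 1 m ∧
      ∀ t₁ ∈ Finset.Icc 1 m, ∀ t₂ ∈ Finset.Icc 1 m, ∀ t₃ ∈ Finset.Icc 1 m,
        t₂ < t₁ → t₃ < t₁ → prec t₃ t₂ → t₁ ∈ A → t₂ ∈ A → t₃ ∈ A)) :
    fr 𝓕 ≤ 1 :=
  Nat.sInf_le (isSchedule_precKey hirr htrans htot ht hup hdown h𝓕).isFree_one

/-- Theorem 6.1: let `≺` be a linear order on `{1, …, m-1}` admitting `t` with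
`t ≺ t+1 ≺ ⋯ ≺ m-1` and `t ≺ t-1 ≺ ⋯ ≺ 1`. Then `𝔣𝔯 (𝓕[≺]) ≤ 1`, where
`A ∈ 𝓕[≺]` iff `A ⊆ {1, …, m}` and for all `t₁, t₂, t₃ ∈ {1, …, m}` with `t₂ < t₁`,
`t₃ < t₁` and `t₃ ≺ t₂`, if `t₁ ∈ A` and `t₂ ∈ A` then `t₃ ∈ A`. -/
theorem statement19 (m : ℕ) (hm : 2 ≤ m) (prec : ℕ → ℕ → Prop)
    (hirr : ∀ a ∈ Finset.Icc 1 (m - 1), ¬prec a a)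
    (htrans : ∀ a ∈ Finset.Icc 1 (m - 1), ∀ b ∈ Finset.Icc 1 (m - 1),
      ∀ c ∈ Finset.Icc 1 (m - 1), prec a b → prec b c → prec a c)
    (htot : ∀ a ∈ Finset.Icc 1 (m - 1), ∀ b ∈ Finset.Icc 1 (m - 1), a ≠ b →
      prec a b ∨ prec b a)
    (t : ℕ) (ht : t ∈ Finset.Icc 1 (m - 1))
    (hup : ∀ s, t ≤ s → s + 1 ≤ m - 1 → prec s (s + 1))
    (hdown : ∀ s, 2 ≤ s → s ≤ t → prec s (s - 1))
    (𝓕 : Finset (Finset ℕ))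
    (h𝓕 : ∀ A : Finset ℕ, A ∈ 𝓕 ↔ (A ⊆ Finset.Icc 1 m ∧
      ∀ t₁ ∈ Finset.Icc 1 m, ∀ t₂ ∈ Finset.Icc 1 m, ∀ t₃ ∈ Finset.Icc 1 m,
        t₂ < t₁ → t₃ < t₁ → prec t₃ t₂ → t₁ ∈ A → t₂ ∈ A → t₃ ∈ A)) :
    fr 𝓕 ≤ 1 :=
  statement19_general m prec hirr htrans htot t ht hup hdown 𝓕 h𝓕

end
end
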